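/- arXiv:0711.3537 — 9 statements merged into one kernel-verified Lean document; each statement's English description precedes it below -/
import Mathlib

section
/- Let $(M, \|\cdot\|)$ be a finitely generated free $\mathbb{Z}$-module of rank $n$ equipped with a norm (coming from an inner product on $M \otimes \mathbb{R}$). Then there exists a basis $\rho_1, \dots, \rho_n$ of $M$ and a constant $c_0(n) > 0$ depending only on $n$ such that for all integers $\alpha_1, \dots, \alpha_n$ one has $c_0(n) \sum_i |\alpha_i|^2 \|\rho_i\|^2 \le \|\sum_i \alpha_i \rho_i\|^2$. -/
set_option maxHeartbeats 1000000

open Submodule RealInnerProductSpace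

theorem keyLemma (n : ℕ) : ∃ c : ℝ, 0 < c ∧
    ∀ (V : Type) [NormedAddCommGroup V] [InnerProductSpace ℝ V]
      (N : Submodule ℤ V),
      (∀ r : ℝ, {x : V | x ∈ N ∧ ‖x‖ ≤ r}.Finite) →
      FiniteDimensional ℝ (span ℝ (N : Set V)) →
      Module.finrank ℝ (span ℝ (N : Set V)) = n →
      ∃ ρ : Fin n → V, span ℤ (Set.range ρ) = N ∧ LinearIndependent ℝ ρ ∧
        ∀ α : Fin n → ℤ,
          c * ∑ i, (α i : ℝ) ^ 2 * ‖ρ i‖ ^ 2 ≤ ‖∑ i, (α i : ℝ) • ρ i‖ ^ 2 := by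
  induction n with
  | zero =>
    refine ⟨1, one_pos, fun V _ _ N hfin hfd hrank => ?_⟩
    have hNbot : N = ⊥ := by
      have hE : span ℝ (N : Set V) = ⊥ := Submodule.finrank_eq_zero.1 hrank
      rw [eq_bot_iff]
      intro x hx
      have hx2 : x ∈ span ℝ (N : Set V) := subset_span hx
      rw [hE] at hx2
      simpa using hx2
    refine ⟨fun i => i.elim0, ?_, ?_, ?_⟩
    · rw [hNbot]
      simp [Set.range_eq_empty]
    · exact linearIndependent_empty_type
    · intro α; simp
  | succ m ih =>
    obtain ⟨c₀, hc₀, IH⟩ := ih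
    refine ⟨min (1/2) (3 * c₀ / (2 * m + 4)), by positivity, ?_⟩
    set c := min (1/2 : ℝ) (3 * c₀ / (2 * m + 4)) with hcdef
    have hc2 : c ≤ 1/2 := min_le_left _ _
    have hcm : c * (2 * m + 4) ≤ 3 * c₀ := by
      have h1 : c ≤ 3 * c₀ / (2 * m + 4) := min_le_right _ _
      have h2 : (0:ℝ) < 2 * m + 4 := by positivity
      calc c * (2*m+4) ≤ (3 * c₀ / (2 * m + 4)) * (2*m+4) := by nlinarith
        _ = 3 * c₀ := by field_simp
    have hcpos : 0 < c := by positivity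
    intro V _ _ N hfin hfd hrank
    -- a nonzero element of N
    have hNne : ∃ x, x ∈ N ∧ x ≠ 0 := by
      by_contra h
      push_neg at h
      have hbot : N = ⊥ := by
        rw [eq_bot_iff]; intro x hx; simpa using h x hx
      rw [hbot] at hrank
      rw [Submodule.bot_coe, Submodule.span_zero_singleton] at hrank
      rw [finrank_bot] at hrank
      omega
    obtain ⟨x₀, hx₀N, hx₀⟩ := hNne
    -- shortest vector
    obtain ⟨v, ⟨hvN, hv0, -⟩, hvmin'⟩ := Set.exists_min_image
      {y : V | y ∈ N ∧ y ≠ 0 ∧ ‖y‖ ≤ ‖x₀‖} (fun y => ‖y‖)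
      ((hfin ‖x₀‖).subset (fun y hy => ⟨hy.1, hy.2.2⟩)) ⟨x₀, hx₀N, hx₀, le_refl _⟩
    have hvmin : ∀ y, y ∈ N → y ≠ 0 → ‖v‖ ≤ ‖y‖ := by
      intro y hy hy0
      by_cases h : ‖y‖ ≤ ‖x₀‖
      · exact hvmin' y ⟨hy, hy0, h⟩
      · exact le_trans (hvmin' x₀ ⟨hx₀N, hx₀, le_refl _⟩) (le_of_not_ge h)
    set e := ‖v‖ with hedef
    have he : 0 < e := norm_pos_iff.2 hv0
    have he2 : (0:ℝ) < e^2 := by positivity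
    -- orthogonal projection away from v
    set π : V →ₗ[ℝ] V :=
      { toFun := fun x => x - (⟪x, v⟫ / e ^ 2) • v
        map_add' := fun x y => by
          rw [inner_add_left, add_div, add_smul]
          abel
        map_smul' := fun t x => by
          rw [real_inner_smul_left]
          simp only [RingHom.id_apply, smul_sub, mul_div_assoc, mul_smul]
      } with hπdef
    have hπapp : ∀ x, π x = x - (⟪x, v⟫ / e ^ 2) • v := fun x => rfl
    have hπv : π v = 0 := by
      rw [hπapp, real_inner_self_eq_norm_sq, ← hedef, div_self (ne_of_gt he2), one_smul, sub_self]
    have hπinner : ∀ x, ⟪π x, v⟫ = 0 := by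
      intro x
      rw [hπapp, inner_sub_left, real_inner_smul_left, real_inner_self_eq_norm_sq, ← hedef,
        div_mul_cancel₀ _ (ne_of_gt he2), sub_self]
    have hpyth : ∀ x, ‖x‖^2 = ‖π x‖^2 + (⟪x, v⟫ / e^2)^2 * e^2 := by
      intro x
      have hx : x = π x + (⟪x, v⟫ / e ^ 2) • v := by rw [hπapp]; abel
      calc ‖x‖^2 = ‖π x + (⟪x, v⟫ / e ^ 2) • v‖^2 := by rw [← hx]
        _ = ‖π x‖^2 + 2 * ⟪π x, (⟪x, v⟫ / e ^ 2) • v⟫ + ‖(⟪x, v⟫ / e ^ 2) • v‖^2 :=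
            norm_add_sq_real _ _
        _ = ‖π x‖^2 + (⟪x, v⟫ / e^2)^2 * e^2 := by
            rw [real_inner_smul_right, hπinner, norm_smul, Real.norm_eq_abs, mul_pow, sq_abs,
              ← hedef]
            ring
    -- kernel of π inside N
    have hker : ∀ x, x ∈ N → π x = 0 → ∃ k : ℤ, x = k • v := by
      intro x hx hπx
      have hxv : x = (⟪x, v⟫ / e ^ 2) • v := by
        have h1 := hπapp x
        rw [hπx] at h1
        exact (sub_eq_zero.1 h1.symm)
      set t := ⟪x, v⟫ / e ^ 2 with htdef
      set k := round t with hkdef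
      have hy : x - k • v ∈ N := sub_mem hx (zsmul_mem hvN k)
      have hnorm : ‖x - k • v‖ = |t - (k:ℝ)| * e := by
        nth_rewrite 1 [hxv]
        rw [← Int.cast_smul_eq_zsmul ℝ, ← sub_smul, norm_smul, Real.norm_eq_abs, hedef]
      by_cases h0 : x - k • v = 0
      · exact ⟨k, by rwa [sub_eq_zero] at h0⟩
      · exfalso
        have h1 := hvmin _ hy h0
        have h2 : |t - (k:ℝ)| ≤ 1/2 := by
          rw [hkdef]; exact abs_sub_round t
        rw [hnorm] at h1
        nlinarith
    -- the projected lattice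
    set N' := Submodule.map (π.restrictScalars ℤ) N with hN'def
    have hmemN' : ∀ y, y ∈ N' ↔ ∃ x ∈ N, π x = y := by
      intro y
      rw [hN'def]
      exact Submodule.mem_map
    -- reduction: every element of N' lifts to a size-reduced element of N
    have hreduce : ∀ y ∈ N', ∃ x, x ∈ N ∧ π x = y ∧ |⟪x, v⟫ / e^2| ≤ 1/2 := by
      intro y hy
      obtain ⟨x, hx, hπx⟩ := (hmemN' y).1 hy
      set t := ⟪x, v⟫ / e ^ 2 with htdef
      refine ⟨x - round t • v, sub_mem hx (zsmul_mem hvN _), ?_, ?_⟩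
      · rw [map_sub, map_zsmul, hπv, smul_zero, sub_zero, hπx]
      · rw [inner_sub_left, ← Int.cast_smul_eq_zsmul ℝ, real_inner_smul_left,
          real_inner_self_eq_norm_sq, ← hedef, sub_div, mul_div_assoc,
          div_self (ne_of_gt he2), mul_one, ← htdef]
        exact abs_sub_round t
    -- finiteness for N'
    have hfin' : ∀ r : ℝ, {y : V | y ∈ N' ∧ ‖y‖ ≤ r}.Finite := by
      intro r
      apply Set.Finite.subset ((hfin (r + e)).image π)
      rintro y ⟨hy, hyr⟩
      obtain ⟨x, hxN, hπx, hμx⟩ := hreduce y hy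
      refine ⟨x, ⟨hxN, ?_⟩, hπx⟩
      have h1 : ‖x‖^2 = ‖y‖^2 + (⟪x, v⟫/e^2)^2 * e^2 := by rw [hpyth x, hπx]
      have h2 : (⟪x, v⟫/e^2)^2 ≤ 1/4 := by
        nlinarith [abs_nonneg (⟪x, v⟫/e^2), sq_abs (⟪x, v⟫/e^2)]
      nlinarith [norm_nonneg x, norm_nonneg y, he]
    -- the real span of N'
    have hsetN' : (N' : Set V) = π '' (N : Set V) := by
      rw [hN'def, Submodule.map_coe]
      rfl
    have hEN' : span ℝ (N' : Set V) = Submodule.map π (span ℝ (N : Set V)) := by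
      rw [hsetN', Submodule.span_image]
    have hfd' : FiniteDimensional ℝ (span ℝ (N' : Set V)) := by
      rw [hEN']
      exact Module.Finite.map _ π
    have hrank' : Module.finrank ℝ (span ℝ (N' : Set V)) = m := by
      set E := span ℝ (N : Set V) with hEdef
      set f := π.comp E.subtype with hfdef
      have hrange : LinearMap.range f = Submodule.map π E := by
        rw [hfdef, LinearMap.range_comp, Submodule.range_subtype]
      have hvE : v ∈ E := subset_span hvN
      have hkerf : LinearMap.ker f = Submodule.comap E.subtype (span ℝ {v}) := by
        ext x
        simp only [LinearMap.mem_ker, hfdef, LinearMap.comp_apply, Submodule.coe_subtype,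
          Submodule.mem_comap, Submodule.mem_span_singleton]
        constructor
        · intro h
          refine ⟨⟪(x:V), v⟫ / e^2, ?_⟩
          have h1 := hπapp (x : V)
          rw [h] at h1
          exact (sub_eq_zero.1 h1.symm).symm
        · rintro ⟨t, ht⟩
          rw [← ht, map_smul, hπv, smul_zero]
      have h1 : Module.finrank ℝ (LinearMap.ker f) = 1 := by
        rw [hkerf,
          LinearEquiv.finrank_eq (Submodule.comapSubtypeEquivOfLe
            (span_le.2 (Set.singleton_subset_iff.2 hvE))),
          finrank_span_singleton hv0]
      have h2 := f.finrank_range_add_finrank_ker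
      rw [hrange, h1, hrank] at h2
      rw [hEN']
      omega
    -- apply the induction hypothesis
    obtain ⟨u, hspanu, hindu, hinequ⟩ := IH V N' hfin' hfd' hrank'
    -- lift the basis of N'
    have hlift : ∀ i : Fin m, ∃ x, x ∈ N ∧ π x = u i ∧ |⟪x, v⟫ / e^2| ≤ 1/2 := by
      intro i
      exact hreduce (u i) (hspanu ▸ subset_span (Set.mem_range_self i))
    choose ρ hρN hρπ hρμ using hlift
    -- the new basis
    have hspan' : span ℤ (Set.range (Fin.cons v ρ : Fin (m+1) → V)) = N := by
      apply le_antisymm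
      · rw [span_le, Set.range_subset_iff]
        intro i
        refine Fin.cases ?_ ?_ i
        · simpa using hvN
        · intro j; simpa using hρN j
      · intro x hx
        have hπx : π x ∈ N' := (hmemN' (π x)).2 ⟨x, hx, rfl⟩
        rw [← hspanu] at hπx
        obtain ⟨β, hβ⟩ := (mem_span_range_iff_exists_fun ℤ).1 hπx
        have hy : x - ∑ i, β i • ρ i ∈ N :=
          sub_mem hx (sum_mem fun i _ => zsmul_mem (hρN i) _)
        have hπy : π (x - ∑ i, β i • ρ i) = 0 := by
          rw [map_sub, map_sum]
          simp_rw [map_zsmul, hρπ]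
          rw [hβ, sub_self]
        obtain ⟨k, hk⟩ := hker _ hy hπy
        have hx2 : x = k • v + ∑ i, β i • ρ i := by
          rw [← hk]; abel
        rw [hx2]
        apply add_mem
        · apply zsmul_mem
          apply subset_span
          exact ⟨0, by simp⟩
        · apply sum_mem
          intro i _
          apply zsmul_mem
          apply subset_span
          exact ⟨i.succ, by simp⟩
    have hind' : LinearIndependent ℝ (Fin.cons v ρ : Fin (m+1) → V) := by
      rw [Fintype.linearIndependent_iff]
      intro g hg
      rw [Fin.sum_univ_succ] at hg
      simp only [Fin.cons_zero, Fin.cons_succ] at hg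
      have hπg : ∑ i : Fin m, g i.succ • u i = 0 := by
        have h1 := congrArg π hg
        rw [map_add, map_smul, hπv, smul_zero, zero_add, map_sum, map_zero] at h1
        simp_rw [map_smul, hρπ] at h1
        exact h1
      have hgs : ∀ i : Fin m, g i.succ = 0 := Fintype.linearIndependent_iff.1 hindu _ hπg
      have hg0 : g 0 = 0 := by
        have h1 : g 0 • v = 0 := by
          have h2 : ∑ i : Fin m, g i.succ • ρ i = 0 := by
            apply Finset.sum_eq_zero
            intro i _
            rw [hgs i, zero_smul]
          rw [h2, add_zero] at hg
          exact hg
        rcases smul_eq_zero.1 h1 with h | h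
        · exact h
        · exact absurd h hv0
      intro i
      exact Fin.cases hg0 hgs i
    refine ⟨Fin.cons v ρ, hspan', hind', ?_⟩
    intro α
    have hQnn : (0:ℝ) ≤ ∑ i : Fin m, (α i.succ : ℝ)^2 :=
      Finset.sum_nonneg fun i _ => sq_nonneg _
    set a : ℝ := (α 0 : ℝ) with hadef
    set β : Fin m → ℝ := fun i => (α i.succ : ℝ) with hβdef
    set μ : Fin m → ℝ := fun i => ⟪ρ i, v⟫ / e^2 with hμdef
    have hμ : ∀ i, |μ i| ≤ 1/2 := fun i => hρμ i
    set s : ℝ := ∑ i, β i * μ i with hsdef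
    set x : V := a • v + ∑ i, β i • ρ i with hxdef
    -- the sum appearing in the goal is x
    have hxeq : ∑ i : Fin (m+1), (α i : ℝ) • (Fin.cons v ρ : Fin (m+1) → V) i = x := by
      rw [Fin.sum_univ_succ]
      simp only [Fin.cons_zero, Fin.cons_succ]
      rfl
    -- inner product of x with v
    have hxv : ⟪x, v⟫ / e^2 = a + s := by
      rw [hxdef, inner_add_left, real_inner_smul_left, sum_inner, real_inner_self_eq_norm_sq,
        ← hedef, add_div, mul_div_assoc, div_self (ne_of_gt he2), mul_one, Finset.sum_div]
      congr 1
      apply Finset.sum_congr rfl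
      intro i _
      rw [real_inner_smul_left, mul_div_assoc]
    -- projection of x
    have hπx : π x = ∑ i, β i • u i := by
      rw [hxdef, map_add, map_smul, hπv, smul_zero, zero_add, map_sum]
      simp_rw [map_smul, hρπ]
    have hX : ‖x‖^2 = ‖∑ i, β i • u i‖^2 + (a + s)^2 * e^2 := by
      rw [hpyth x, hπx, hxv]
    have hU := hinequ (fun i => α i.succ)
    have hρsq : ∀ i, ‖ρ i‖^2 = ‖u i‖^2 + (μ i)^2 * e^2 := fun i => by
      rw [hpyth (ρ i), hρπ i]
    have hρ0 : ∀ i, ρ i ≠ 0 := fun i h =>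
      hindu.ne_zero i (by rw [← hρπ i, h, map_zero])
    have heρ : ∀ i, e ≤ ‖ρ i‖ := fun i => hvmin _ (hρN i) (hρ0 i)
    have hu34 : ∀ i, (3/4) * ‖ρ i‖^2 ≤ ‖u i‖^2 := by
      intro i
      have h1 := hρsq i
      have h2 : (μ i)^2 ≤ 1/4 := by
        nlinarith [hμ i, abs_nonneg (μ i), sq_abs (μ i)]
      nlinarith [heρ i, he]
    -- Cauchy–Schwarz bound on s
    have hs2 : s^2 ≤ ((m:ℝ)/4) * ∑ i, β i^2 := by
      have hCS := Finset.sum_mul_sq_le_sq_mul_sq Finset.univ β μ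
      have hμsum : ∑ i, (μ i)^2 ≤ (m:ℝ)/4 := by
        calc ∑ i, (μ i)^2 ≤ ∑ _i : Fin m, (1/4:ℝ) :=
              Finset.sum_le_sum fun i _ => by
                nlinarith [hμ i, abs_nonneg (μ i), sq_abs (μ i)]
          _ = (m:ℝ)/4 := by
              rw [Finset.sum_const]
              simp
              ring
      calc s^2 ≤ (∑ i, β i^2) * ∑ i, (μ i)^2 := hCS
        _ ≤ (∑ i, β i^2) * ((m:ℝ)/4) := mul_le_mul_of_nonneg_left hμsum hQnn
        _ = ((m:ℝ)/4) * ∑ i, β i^2 := by ring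
    -- abbreviations for the final computation
    set B : ℝ := ∑ i, β i^2 * ‖ρ i‖^2 with hBdef
    set U : ℝ := ∑ i, β i^2 * ‖u i‖^2 with hUdef
    set Q : ℝ := ∑ i, β i^2 with hQdef
    set P : ℝ := ‖∑ i, β i • u i‖^2 with hPdef
    have hBnn : 0 ≤ B :=
      Finset.sum_nonneg fun i _ => mul_nonneg (sq_nonneg _) (sq_nonneg _)
    have hUB : (3/4) * B ≤ U := by
      calc (3/4) * B = ∑ i, β i^2 * ((3/4) * ‖ρ i‖^2) := by
            rw [hBdef, Finset.mul_sum]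
            apply Finset.sum_congr rfl
            intro i _
            ring
        _ ≤ U := Finset.sum_le_sum fun i _ =>
            mul_le_mul_of_nonneg_left (hu34 i) (sq_nonneg _)
    have hQB : Q * e^2 ≤ B := by
      calc Q * e^2 = ∑ i, β i^2 * e^2 := by rw [hQdef, Finset.sum_mul]
        _ ≤ B := Finset.sum_le_sum fun i _ =>
            mul_le_mul_of_nonneg_left (by nlinarith [heρ i, he]) (sq_nonneg _)
    have hUP : c₀ * U ≤ P := hU
    have hA : (0:ℝ) ≤ (a+s)^2 * e^2 := by positivity
    -- split the goal sum
    have hLHS : ∑ i : Fin (m+1), (α i : ℝ)^2 * ‖(Fin.cons v ρ : Fin (m+1) → V) i‖^2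
        = a^2 * e^2 + B := by
      rw [Fin.sum_univ_succ]
      simp only [Fin.cons_zero, Fin.cons_succ]
      rfl
    rw [hLHS, hxeq, hX]
    -- final arithmetic
    have key1 : a^2 * e^2 ≤ 2*((a+s)^2 * e^2) + ((m:ℝ)/2) * B := by
      have k0 : a^2 ≤ 2*(a+s)^2 + 2*s^2 := by nlinarith [sq_nonneg (a + 2*s)]
      have k1 : s^2 * e^2 ≤ (((m:ℝ)/4) * Q) * e^2 :=
        mul_le_mul_of_nonneg_right hs2 he2.le
      have k2 : ((m:ℝ)/4) * (Q * e^2) ≤ ((m:ℝ)/4) * B :=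
        mul_le_mul_of_nonneg_left hQB (by positivity)
      nlinarith [mul_le_mul_of_nonneg_right k0 he2.le]
    have hstep1 : c * (a^2*e^2 + B) ≤ c * (2*((a+s)^2*e^2) + ((m:ℝ)/2)*B + B) :=
      mul_le_mul_of_nonneg_left (by linarith only [key1]) hcpos.le
    have h2cA : 2*c*((a+s)^2*e^2) ≤ (a+s)^2*e^2 := by
      have h2c : 2*c ≤ 1 := by linarith only [hc2]
      calc 2*c*((a+s)^2*e^2) ≤ 1*((a+s)^2*e^2) := mul_le_mul_of_nonneg_right h2c hA
        _ = (a+s)^2*e^2 := one_mul _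
    have hcBle : c*(((m:ℝ)+2)/2) ≤ (3/4)*c₀ := by
      linarith only [hcm]
    have hcB : c*((((m:ℝ)+2)/2))*B ≤ (3/4)*c₀*B :=
      mul_le_mul_of_nonneg_right hcBle hBnn
    have hc₀B : (3/4)*c₀*B ≤ c₀*U := by
      have := mul_le_mul_of_nonneg_left hUB hc₀.le
      linarith only [this]
    linarith only [hstep1, h2cA, hcB, hc₀B, hUP]

/-- Every hermitian free ℤ-module of rank `n` (a lattice of rank `n` in a real
inner product space) admits a basis `ρ₁, …, ρₙ` such that
`c₀(n) * ∑ᵢ |αᵢ|² ‖ρᵢ‖² ≤ ‖∑ᵢ αᵢ ρᵢ‖²` for all integers `αᵢ`, where `c₀(n) > 0` depends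
only on `n`. The lattice condition is expressed by requiring that some (hence any) ℤ-basis of
`M` is ℝ-linearly independent in the ambient inner product space. -/
theorem stmt_0 (n : ℕ) :
    ∃ c : ℝ, 0 < c ∧
      ∀ (V : Type) [NormedAddCommGroup V] [InnerProductSpace ℝ V]
        (M : Submodule ℤ V) (b : Module.Basis (Fin n) ℤ M),
        LinearIndependent ℝ (fun i => (b i : V)) →
        ∃ ρ : Module.Basis (Fin n) ℤ M,
          ∀ α : Fin n → ℤ,
            c * ∑ i, (|α i| : ℝ) ^ 2 * ‖(ρ i : V)‖ ^ 2 ≤ ‖∑ i, α i • (ρ i : V)‖ ^ 2 := by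
  obtain ⟨c, hc, H⟩ := keyLemma n
  refine ⟨c, hc, fun V _ _ M b hb => ?_⟩
  set w : Fin n → V := fun i => (b i : V) with hw
  -- the ambient real span
  set E : Submodule ℝ V := span ℝ (Set.range w) with hE
  set hbE : Module.Basis (Fin n) ℝ E := Module.Basis.span hb with hbEdef
  -- N = M
  have hNM : span ℤ (Set.range w) = M := by
    apply le_antisymm
    · rw [span_le, Set.range_subset_iff]
      exact fun i => SetLike.coe_mem (b i)
    · intro x hx
      have : (⟨x, hx⟩ : M) ∈ span ℤ (Set.range b) := by
        rw [b.span_eq]; trivial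
      have h2 : x ∈ Submodule.map M.subtype (span ℤ (Set.range b)) :=
        ⟨⟨x, hx⟩, this, rfl⟩
      rwa [Submodule.map_span, ← Set.range_comp] at h2
  -- the lattice L inside E
  set L : Submodule ℤ E := span ℤ (Set.range hbE) with hL
  have hmapL : Submodule.map (E.subtype.restrictScalars ℤ) L = span ℤ (Set.range w) := by
    rw [hL, Submodule.map_span, ← Set.range_comp]
    congr 1
    ext x
    simp only [Function.comp_apply, Set.mem_range, LinearMap.coe_restrictScalars,
      Submodule.coe_subtype, hbEdef]
    exact exists_congr fun y => by rw [Module.Basis.span_apply hb y]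
  have hfin : ∀ r : ℝ, {x : V | x ∈ span ℤ (Set.range w) ∧ ‖x‖ ≤ r}.Finite := by
    intro r
    have : FiniteDimensional ℝ E := Module.Finite.of_basis hbE
    have hdis : DiscreteTopology ((L : Set E)) := by
      rw [hL]; exact (inferInstance : DiscreteTopology (span ℤ (Set.range hbE)))
    have hclosed : IsClosed (L : Set E) := by
      have := AddSubgroup.isClosed_of_discrete (H := L.toAddSubgroup)
      exact this
    have hfin' : Set.Finite (Metric.closedBall (0 : E) r ∩ (L : Set E)) :=
      Metric.finite_isBounded_inter_isClosed (isDiscrete_iff_discreteTopology.mpr hdis) Metric.isBounded_closedBall hclosed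
    have : {x : V | x ∈ span ℤ (Set.range w) ∧ ‖x‖ ≤ r} ⊆
        (E.subtype '' (Metric.closedBall (0 : E) r ∩ (L : Set E))) := by
      rintro x ⟨hx1, hx2⟩
      rw [← hmapL] at hx1
      obtain ⟨y, hy, rfl⟩ := hx1
      exact ⟨y, ⟨by simpa [Metric.mem_closedBall, dist_eq_norm] using hx2, hy⟩, rfl⟩
    exact (hfin'.image _).subset this
  have hspanE : span ℝ ((span ℤ (Set.range w) : Submodule ℤ V) : Set V) = E := by
    rw [hE, span_span_of_tower]
  have hfd : FiniteDimensional ℝ (span ℝ ((span ℤ (Set.range w) : Submodule ℤ V) : Set V)) := by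
    rw [hspanE]
    exact Module.Finite.of_basis hbE
  have hrank : Module.finrank ℝ (span ℝ ((span ℤ (Set.range w) : Submodule ℤ V) : Set V)) = n := by
    rw [hspanE, hE]
    simpa using finrank_span_eq_card hb
  obtain ⟨ρ, hspan, hind, hineq⟩ := H V (span ℤ (Set.range w)) hfin hfd hrank
  have hρM : ∀ i, ρ i ∈ M := by
    intro i
    rw [← hNM, ← hspan]
    exact subset_span (Set.mem_range_self i)
  have hindZ : LinearIndependent ℤ ρ :=
    hind.restrict_scalars (smul_left_injective ℤ (one_ne_zero (α := ℝ)))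
  set ρM : Fin n → M := fun i => ⟨ρ i, hρM i⟩ with hρMdef
  have hindZM : LinearIndependent ℤ ρM := by
    apply LinearIndependent.of_comp M.subtype
    convert hindZ
    rfl
  have hspanM : ⊤ ≤ span ℤ (Set.range ρM) := by
    have : span ℤ (Set.range ρM) = ⊤ := by
      apply Submodule.map_injective_of_injective
        (show Function.Injective M.subtype from Subtype.coe_injective)
      rw [Submodule.map_top, Submodule.range_subtype, Submodule.map_span, ← Set.range_comp,
        show (M.subtype ∘ ρM) = ρ from rfl, hspan, hNM]
    exact this.ge
  refine ⟨Module.Basis.mk hindZM hspanM, fun α => ?_⟩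
  have hB : ∀ i, ((Module.Basis.mk hindZM hspanM i : M) : V) = ρ i := by
    intro i; rw [Module.Basis.mk_apply]
  have := hineq α
  calc c * ∑ i, (|α i| : ℝ) ^ 2 * ‖((Module.Basis.mk hindZM hspanM i : M) : V)‖ ^ 2
      = c * ∑ i, (α i : ℝ) ^ 2 * ‖ρ i‖ ^ 2 := by
        congr 1; apply Finset.sum_congr rfl; intro i _
        rw [hB]; rw [sq_abs]
    _ ≤ ‖∑ i, (α i : ℝ) • ρ i‖ ^ 2 := this
    _ = ‖∑ i, α i • ((Module.Basis.mk hindZM hspanM i : M) : V)‖ ^ 2 := by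
        congr 2; apply Finset.sum_congr rfl; intro i _
        rw [hB, Int.cast_smul_eq_zsmul]
end

section
/- Let $E$ be an elliptic curve without complex multiplication and let $\psi: E^g \to E^r$ be a surjective morphism of rank $r$ given by an integer matrix. Then there exists a Gauss-reduced morphism $\phi: E^g \to E^r$ of rank $r$ such that $\ker(\psi) \subset \ker(\phi) + (E^r_{\mathrm{Tor}} \times \{0\}^{g-r})$ (up to a permutation of the $g$ coordinates). -/
lemma exists_nonzero_minor (g r : ℕ) (ψ : Matrix (Fin r) (Fin g) ℤ)
    (hrank : (ψ.map (Int.cast : ℤ → ℚ)).rank = r) :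
    ∃ σ : Fin r → Fin g, (ψ.submatrix id σ).det ≠ 0 := by
  classical
  set A : Matrix (Fin r) (Fin g) ℚ := ψ.map (Int.cast : ℤ → ℚ) with hA
  have hspan : Submodule.span ℚ (Set.range A.transpose) = ⊤ := by
    apply Submodule.eq_top_of_finrank_eq
    show Module.finrank ℚ (Submodule.span ℚ (Set.range A.col)) = _
    rw [← Matrix.rank_eq_finrank_span_cols, hrank, Module.finrank_fintype_fun_eq_card,
      Fintype.card_fin]
  obtain ⟨t, hts, hspan', hli⟩ := exists_linearIndependent ℚ (Set.range A.transpose)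
  have htfin : t.Finite := (Set.finite_range A.transpose).subset hts
  haveI : Fintype t := htfin.fintype
  have hBtop : ⊤ ≤ Submodule.span ℚ (Set.range (Subtype.val : t → (Fin r → ℚ))) := by
    rw [Subtype.range_coe, hspan', hspan]
  let B : Module.Basis t ℚ (Fin r → ℚ) := Module.Basis.mk hli hBtop
  have hcard : Fintype.card t = r := by
    have := Module.finrank_eq_card_basis B
    rw [Module.finrank_fintype_fun_eq_card, Fintype.card_fin] at this
    omega
  let e : Fin r ≃ t := (Fintype.equivFinOfCardEq hcard).symm
  have hchoice : ∀ v : t, ∃ j : Fin g, A.transpose j = (v : Fin r → ℚ) := fun v => hts v.2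
  choose j hj using hchoice
  refine ⟨fun i => j (e i), ?_⟩
  have hcol : ∀ i : Fin r, (fun i' => A i' (j (e i))) = ((e i : t) : Fin r → ℚ) := by
    intro i; exact hj (e i)
  -- linear independence of the chosen columns
  have hli2 : LinearIndependent ℚ ((Subtype.val : t → (Fin r → ℚ)) ∘ e) :=
    hli.comp e e.injective
  -- now show det ≠ 0 over ℚ, then over ℤ
  have hdetQ : (A.submatrix id fun i => j (e i)).det ≠ 0 := by
    intro h0
    obtain ⟨v, hv0, hv⟩ := Matrix.exists_mulVec_eq_zero_iff.mpr h0
    apply hv0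
    have := Fintype.linearIndependent_iff.mp hli2 v ?_
    · funext i; exact this i
    · funext i'
      have := congrFun hv i'
      simpa [Matrix.mulVec, dotProduct, Function.comp, ← hcol, mul_comm,
        Finset.sum_apply] using this
  intro h0
  apply hdetQ
  have : (A.submatrix id fun i => j (e i)) = ((Int.castRingHom ℚ).mapMatrix
      (ψ.submatrix id fun i => j (e i))) := by
    ext i k; simp [hA, Matrix.submatrix, Matrix.map]
  rw [this, ← RingHom.map_det, h0]
  simp

lemma exists_gcd_all {r g : ℕ} (M : Matrix (Fin r) (Fin g) ℤ) :
    ∃ d : ℤ, 0 ≤ d ∧ (∀ i j, d ∣ M i j) ∧ (∀ e : ℤ, (∀ i j, e ∣ M i j) → e ∣ d) := by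
  refine ⟨|Finset.univ.gcd (fun p : Fin r × Fin g => M p.1 p.2)|, abs_nonneg _, ?_, ?_⟩
  · intro i j
    exact (abs_dvd _ _).mpr (Finset.gcd_dvd (Finset.mem_univ ((i, j) : Fin r × Fin g)))
  · intro e he
    exact (dvd_abs _ _).mpr (Finset.dvd_gcd fun p _ => he p.1 p.2)

set_option maxHeartbeats 1600000 in
/-- Let `E` be an elliptic curve without CM (points form a divisible abelian
group `G`, morphisms `E^g → E^r` are integer matrices). For every surjective morphism
`ψ : E^g → E^r` of rank `r` there is a Gauss-reduced morphism `φ` of rank `r` (i.e. up to a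
column permutation `σ`, `a·I_r` is a submatrix of `φ`, all entries have absolute value `≤ a`,
and the entries have gcd 1) such that `ker ψ ⊆ ker φ + (E^r_Tor × {0}^{g-r})` (up to the
permutation of coordinates given by `σ`). -/
theorem stmt_5 (g r : ℕ) (hrg : r ≤ g) (hr : 0 < r)
    (G : Type) [AddCommGroup G]
    (hdiv : ∀ (n : ℤ), n ≠ 0 → ∀ z : G, ∃ w : G, n • w = z)
    (ψ : Matrix (Fin r) (Fin g) ℤ)
    (hrank : (ψ.map (Int.cast : ℤ → ℚ)).rank = r) :
    ∃ (φ : Matrix (Fin r) (Fin g) ℤ) (a : ℤ) (σ : Fin r → Fin g),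
      0 < a ∧ Function.Injective σ ∧
      (∀ i j : Fin r, φ i (σ j) = if i = j then a else 0) ∧
      (∀ i j, |φ i j| ≤ a) ∧
      (∀ d : ℤ, (∀ i j, d ∣ φ i j) → IsUnit d) ∧
      ∀ x : Fin g → G, (∀ i, ∑ j, ψ i j • x j = 0) →
        ∃ b t : Fin g → G,
          (∀ i, ∑ j, φ i j • b j = 0) ∧
          (∀ j, ∃ m : ℤ, m ≠ 0 ∧ m • t j = 0) ∧
          (∀ j, j ∉ Set.range σ → t j = 0) ∧
          x = b + t := by
  classical
  obtain ⟨σ₀, hσ₀⟩ := exists_nonzero_minor g r ψ hrank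
  -- choose σ maximizing |det of submatrix|
  obtain ⟨σ, -, hmax⟩ := Finset.exists_max_image (Finset.univ : Finset (Fin r → Fin g))
    (fun τ => |(ψ.submatrix id τ).det|) ⟨σ₀, Finset.mem_univ _⟩
  have hmax : ∀ τ : Fin r → Fin g, |(ψ.submatrix id τ).det| ≤ |(ψ.submatrix id σ).det| :=
    fun τ => hmax τ (Finset.mem_univ _)
  set B : Matrix (Fin r) (Fin r) ℤ := ψ.submatrix id σ with hB
  set D : ℤ := B.det with hD
  have hD0 : D ≠ 0 := by
    intro h
    have h2 := hmax σ₀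
    rw [h] at h2
    simp at h2
    exact hσ₀ h2
  have hσinj : Function.Injective σ := by
    intro j1 j2 h
    by_contra hne
    apply hD0
    exact Matrix.det_zero_of_column_eq hne (fun k => by simp [hB, Matrix.submatrix, h])
  set ε : ℤ := if D < 0 then -1 else 1 with hε
  have hεD : ε * D = |D| := by
    rcases lt_or_ge D 0 with h | h
    · simp [hε, h, abs_of_neg h]
    · simp [hε, not_lt.mpr h, abs_of_nonneg h]
  set M : Matrix (Fin r) (Fin g) ℤ := ε • (B.adjugate * ψ) with hM
  -- key column fact
  have hMcol : ∀ i j : Fin r, M i (σ j) = if i = j then |D| else 0 := by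
    intro i j
    have h1 : (B.adjugate * ψ) i (σ j) = (B.adjugate * B) i j := by
      simp [Matrix.mul_apply, hB, Matrix.submatrix]
    have h2 : (B.adjugate * B) i j = D * (if i = j then 1 else 0) := by
      rw [Matrix.adjugate_mul]
      simp [Matrix.smul_apply, Matrix.one_apply, hD]
    simp only [hM, Matrix.smul_apply, smul_eq_mul, h1, h2]
    split <;> [skip; ring]
    · rw [← mul_assoc, hεD]; ring
  -- entry bound
  have hMbound : ∀ (i : Fin r) (j : Fin g), |M i j| ≤ |D| := by
    intro i j
    have h1 : (B.adjugate * ψ) i j = (B.adjugate.mulVec fun k => ψ k j) i := by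
      simp [Matrix.mul_apply, Matrix.mulVec, dotProduct]
    have h2 : (B.adjugate.mulVec fun k => ψ k j) i = (B.updateCol i fun k => ψ k j).det := by
      rw [← Matrix.cramer_eq_adjugate_mulVec, Matrix.cramer_apply]
    have h3 : (B.updateCol i fun k => ψ k j) = ψ.submatrix id (Function.update σ i j) := by
      ext k l
      by_cases h : l = i <;>
        simp [Matrix.updateCol_apply, h, hB, Matrix.submatrix, Function.update]
    have hkey := hmax (Function.update σ i j)
    rw [← h3, ← h2, ← h1] at hkey
    calc |M i j| = |ε| * |(B.adjugate * ψ) i j| := by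
          simp [hM, Matrix.smul_apply, abs_mul]
      _ ≤ |D| := by
          have : |ε| = 1 := by rcases lt_or_ge D 0 with h | h <;> simp [hε, h, not_lt.mpr]
          rw [this, one_mul]
          exact hkey
  -- gcd of entries
  obtain ⟨d, hdnonneg, hdvd, hgcd⟩ := exists_gcd_all M
  set i0 : Fin r := ⟨0, hr⟩ with hi0
  have hdD : d ∣ |D| := by
    have := hdvd i0 (σ i0)
    rwa [hMcol i0 i0, if_pos rfl] at this
  have habsD : (0:ℤ) < |D| := abs_pos.mpr hD0
  have hd0 : d ≠ 0 := by
    intro h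
    rw [h] at hdD
    rw [zero_dvd_iff] at hdD
    omega
  have hdpos : 0 < d := lt_of_le_of_ne hdnonneg (Ne.symm hd0)
  set φ : Matrix (Fin r) (Fin g) ℤ := Matrix.of (fun i j => M i j / d) with hφ
  set a : ℤ := |D| / d with ha
  have hda : d * a = |D| := Int.mul_ediv_cancel' hdD
  have hdφ : ∀ (i : Fin r) (j : Fin g), d * φ i j = M i j := fun i j =>
    Int.mul_ediv_cancel' (hdvd i j)
  have hapos : 0 < a := by nlinarith
  refine ⟨φ, a, σ, hapos, hσinj, ?_, ?_, ?_, ?_⟩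
  · -- identity columns
    intro i j
    show M i (σ j) / d = _
    rw [hMcol]
    split
    · rfl
    · exact Int.zero_ediv d
  · -- bound
    intro i j
    have h1 : d * |φ i j| = |M i j| := by
      rw [← abs_of_pos hdpos, ← abs_mul, hdφ]
    have h2 := hMbound i j
    nlinarith
  · -- gcd 1
    intro e he
    have hde : d * e ∣ d := by
      apply hgcd
      intro i j
      rw [← hdφ i j]
      exact mul_dvd_mul_left d (he i j)
    obtain ⟨k, hk⟩ := hde
    have heq : d * (e * k) = d * 1 := by rw [mul_one, ← mul_assoc, ← hk]
    have hek : e * k = 1 := mul_left_cancel₀ hd0 heq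
    exact IsUnit.of_mul_eq_one k hek
  · -- kernel condition
    intro x hx
    have hMx : ∀ i, ∑ j, M i j • x j = 0 := by
      intro i
      have step : ∀ j, M i j • x j = ∑ k, (ε * B.adjugate i k) • (ψ k j • x j) := by
        intro j
        have hMij : M i j = ∑ k, ε * B.adjugate i k * ψ k j := by
          simp [hM, Matrix.smul_apply, Matrix.mul_apply, Finset.mul_sum, mul_assoc]
        rw [hMij, Finset.sum_smul]
        exact Finset.sum_congr rfl fun k _ => by rw [mul_smul]
      rw [Finset.sum_congr rfl fun j _ => step j, Finset.sum_comm]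
      refine Finset.sum_eq_zero fun k _ => ?_
      rw [← Finset.smul_sum, hx k, smul_zero]
    set y : Fin r → G := fun i => ∑ j, φ i j • x j with hy
    have hdy : ∀ i, d • y i = 0 := by
      intro i
      calc d • y i = ∑ j, (d * φ i j) • x j := by
            rw [hy, Finset.smul_sum]
            exact Finset.sum_congr rfl fun j _ => (mul_smul d (φ i j) (x j)).symm
        _ = ∑ j, M i j • x j := Finset.sum_congr rfl fun j _ => by rw [hdφ]
        _ = 0 := hMx i
    obtain ⟨u, hu⟩ : ∃ u : Fin r → G, ∀ i, a • u i = y i := by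
      choose u hu using fun i => hdiv a (ne_of_gt hapos) (y i)
      exact ⟨u, hu⟩
    set t : Fin g → G := fun jj => if h : ∃ i, σ i = jj then u h.choose else 0 with ht
    have htσ : ∀ i' : Fin r, t (σ i') = u i' := by
      intro i'
      have h : ∃ i, σ i = σ i' := ⟨i', rfl⟩
      rw [ht]
      simp only [dif_pos h]
      congr 1
      exact hσinj h.choose_spec
    have htsum : ∀ i, ∑ j, φ i j • t j = y i := by
      intro i
      have h1 : ∑ j, φ i j • t j = ∑ j ∈ Finset.image σ Finset.univ, φ i j • t j := by
        symm
        apply Finset.sum_subset (Finset.subset_univ _)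
        intro jj _ hjj
        have : t jj = 0 := by
          rw [ht]
          apply dif_neg
          rintro ⟨i', rfl⟩
          exact hjj (Finset.mem_image_of_mem σ (Finset.mem_univ i'))
        rw [this, smul_zero]
      rw [h1, Finset.sum_image (fun i1 _ i2 _ h => hσinj h)]
      have h2 : ∀ i' : Fin r, φ i (σ i') • t (σ i') = (if i = i' then a else 0) • u i' := by
        intro i'
        rw [htσ]
        congr 1
        show M i (σ i') / d = _
        rw [hMcol]
        split
        · rfl
        · exact Int.zero_ediv d
      rw [Finset.sum_congr rfl fun i' _ => h2 i']
      simp [ite_smul, hu i]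
    refine ⟨x - t, t, ?_, ?_, ?_, by funext j; simp⟩
    · intro i
      simp only [Pi.sub_apply]
      have : ∑ j, φ i j • (x j - t j) = (∑ j, φ i j • x j) - ∑ j, φ i j • t j := by
        rw [← Finset.sum_sub_distrib]
        exact Finset.sum_congr rfl fun j _ => smul_sub _ _ _
      rw [this, htsum i]
      simp [hy]
    · intro jj
      refine ⟨d * a, by positivity, ?_⟩
      rw [ht]
      by_cases h : ∃ i, σ i = jj
      · simp only [dif_pos h]
        rw [mul_smul, hu, hdy]
      · simp [dif_neg h]
    · intro jj hjj
      rw [ht]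
      apply dif_neg
      rintro ⟨i', rfl⟩
      exact hjj ⟨i', rfl⟩
end

section
/- Let $E$ be an elliptic curve without CM and $\phi = (aI_r | L): E^g \to E^r$ a Gauss-reduced morphism of rank $r$ (so $H(\phi) = a$). (i) For every $\xi \in E^g(\overline{\mathbb{Q}})$ with $\|\xi\| \le \varepsilon$, there exists $\xi'' \in E^r(\overline{\mathbb{Q}})$ with $\|\xi''\| \le g\varepsilon$ such that $\phi(\xi) = [a]\xi''$; hence $\phi(\xi) = \phi(\xi', 0^{g-r})$ where $\xi' = \xi''$. (ii) If $\Gamma_0$ is a division-closed submodule of $E(\overline{\mathbb{Q}})$, then for every $y \in \Gamma_0^g$ there exists $y'' \in \Gamma_0^r$ such that $\phi(y) = [a]y''$. -/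
lemma nm_sum_le {G : Type} [AddCommGroup G] (nm : G → ℝ)
    (hnm0 : nm 0 = 0) (hnm_add : ∀ x y : G, nm (x + y) ≤ nm x + nm y)
    {ι : Type} (s : Finset ι) (f : ι → G) :
    nm (∑ j ∈ s, f j) ≤ ∑ j ∈ s, nm (f j) := by
  classical
  induction s using Finset.induction with
  | empty => simp [hnm0]
  | insert _ _ h ih =>
    rw [Finset.sum_insert h, Finset.sum_insert h]
    exact le_trans (hnm_add _ _) (by linarith)

/-- Let `E` be an elliptic curve without CM and `φ = (a I_r | L) : E^g → E^r`
Gauss-reduced of rank `r` (so `H(φ) = a`). The points `G = E(ℚ̄)` form a divisible abelian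
group with the Néron–Tate norm `nm` satisfying `nm (n • x) = |n| nm x`; the norm on a tuple
is the maximum of the coordinate norms.
(i) For every `ξ ∈ E^g` with `‖ξ‖ ≤ ε` there is `ξ'' ∈ E^r` with `‖ξ''‖ ≤ g ε` and
`φ(ξ) = [a] ξ''` (equivalently `φ(ξ) = φ(ξ'', 0^{g-r})`).
(ii) If `Γ₀ ⊆ E(ℚ̄)` is division-closed, then for every `y ∈ Γ₀^g` there is `y'' ∈ Γ₀^r`
with `φ(y) = [a] y''`. -/
theorem stmt_6 (g r : ℕ) (hrg : r ≤ g)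
    (G : Type) [AddCommGroup G]
    (nm : G → ℝ)
    (hnm0 : nm 0 = 0)
    (hnm_nonneg : ∀ x : G, 0 ≤ nm x)
    (hnm_add : ∀ x y : G, nm (x + y) ≤ nm x + nm y)
    (hnm_smul : ∀ (n : ℤ) (x : G), nm (n • x) = |(n : ℝ)| * nm x)
    (hdiv : ∀ (n : ℤ), n ≠ 0 → ∀ z : G, ∃ w : G, n • w = z)
    (A : Matrix (Fin r) (Fin g) ℤ) (a : ℤ) (ha : 0 < a)
    (hid : ∀ i j : Fin r, A i (Fin.castLE hrg j) = if i = j then a else 0)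
    (hH : ∀ i j, |A i j| ≤ a)
    (Γ₀ : AddSubgroup G)
    (hsat : ∀ (n : ℤ), n ≠ 0 → ∀ z : G, n • z ∈ Γ₀ → z ∈ Γ₀) :
    (∀ (ε : ℝ), 0 ≤ ε → ∀ ξ : Fin g → G, (∀ j, nm (ξ j) ≤ ε) →
      ∃ ξ'' : Fin r → G, (∀ i, nm (ξ'' i) ≤ g * ε) ∧
        ∀ i, ∑ j, A i j • ξ j = a • ξ'' i) ∧
    (∀ y : Fin g → G, (∀ j, y j ∈ Γ₀) →
      ∃ y'' : Fin r → G, (∀ i, y'' i ∈ Γ₀) ∧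
        ∀ i, ∑ j, A i j • y j = a • y'' i) := by
  have ha' : a ≠ 0 := ne_of_gt ha
  have haR : (0:ℝ) < (a:ℝ) := by exact_mod_cast ha
  constructor
  · intro ε hε ξ hξ
    choose w hw using fun i : Fin r => hdiv a ha' (∑ j, A i j • ξ j)
    refine ⟨w, fun i => ?_, fun i => (hw i).symm⟩
    have h1 : nm (∑ j, A i j • ξ j) ≤ (g : ℝ) * ((a:ℝ) * ε) := by
      calc nm (∑ j, A i j • ξ j) ≤ ∑ j, nm (A i j • ξ j) :=
            nm_sum_le nm hnm0 hnm_add _ _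
        _ ≤ ∑ _j : Fin g, (a:ℝ) * ε := by
            refine Finset.sum_le_sum fun j _ => ?_
            rw [hnm_smul]
            have h2 : |(A i j : ℝ)| ≤ (a:ℝ) := by exact_mod_cast hH i j
            exact mul_le_mul h2 (hξ j) (hnm_nonneg _) (le_of_lt haR)
        _ = (g : ℝ) * ((a:ℝ) * ε) := by simp [mul_comm]
    have h3 : (a:ℝ) * nm (w i) ≤ (a:ℝ) * ((g:ℝ) * ε) := by
      have := hnm_smul a (w i)
      rw [hw i] at this
      rw [abs_of_pos haR] at this
      rw [← this]
      calc nm (∑ j, A i j • ξ j) ≤ (g : ℝ) * ((a:ℝ) * ε) := h1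
        _ = (a:ℝ) * ((g:ℝ) * ε) := by ring
    exact le_of_mul_le_mul_left h3 haR
  · intro y hy
    choose w hw using fun i : Fin r => hdiv a ha' (∑ j, A i j • y j)
    refine ⟨w, fun i => ?_, fun i => (hw i).symm⟩
    apply hsat a ha'
    rw [hw i]
    exact AddSubgroup.sum_mem _ fun j _ => AddSubgroup.zsmul_mem _ (hy j) _
end

section
/- Let $Q \ge 2$ be an integer, and let $\phi = (aI_r | L) \in M_{r \times g}(\mathbb{Z})$ be a Gauss-reduced matrix (so $a = H(\phi) > 0$ is the maximum absolute value of the entries, $L \in M_{r \times (g-r)}(\mathbb{Z})$, and the entries of $\phi$ have gcd 1). Set $n = rg - r^2 + 1$. Then there exists a Gauss-reduced matrix $\psi = (fI_r | L') \in M_{r \times g}(\mathbb{Z})$ such that $H(\psi) = f \le Q^{n}$ and $\left| \frac{\psi}{f} - \frac{\phi}{a} \right| \le Q^{-1/2} f^{-1 - \frac{1}{2n}}$, where $|\cdot|$ on matrices denotes the maximum absolute value of the entries. -/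
lemma dirichlet_simul {ι : Type*} [Fintype ι] [DecidableEq ι] (x : ι → ℝ) (Q : ℕ) (hQ : 2 ≤ Q) :
    ∃ (f : ℕ) (p : ι → ℤ), 0 < f ∧ f ≤ Q ^ (Fintype.card ι) ∧
      ∀ i, |(f : ℝ) * x i - p i| ≤ 1 / Q := by
  have hQ0 : (0:ℝ) < Q := by positivity
  set F : ℕ → (ι → ℤ) := fun k i => ⌊(Q : ℝ) * Int.fract ((k : ℝ) * x i)⌋ with hF
  have hmaps : ∀ k ∈ Finset.range (Q ^ (Fintype.card ι) + 1), F k ∈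
      Fintype.piFinset (fun _ : ι => Finset.Ico (0:ℤ) Q) := by
    intro k _
    rw [Fintype.mem_piFinset]
    intro i
    rw [Finset.mem_Ico]
    constructor
    · exact Int.floor_nonneg.mpr (mul_nonneg hQ0.le (Int.fract_nonneg _))
    · rw [Int.floor_lt]
      push_cast
      calc (Q:ℝ) * Int.fract ((k : ℝ) * x i) < Q * 1 := by
            exact mul_lt_mul_of_pos_left (Int.fract_lt_one _) hQ0
        _ = Q := mul_one _
  have hcard : (Fintype.piFinset (fun _ : ι => Finset.Ico (0:ℤ) Q)).card <
      (Finset.range (Q ^ (Fintype.card ι) + 1)).card := by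
    rw [Fintype.card_piFinset, Finset.card_range]
    simp [Int.card_Ico]
  obtain ⟨k1, hk1, k2, hk2, hne, heq⟩ :=
    Finset.exists_ne_map_eq_of_card_lt_of_maps_to hcard hmaps
  wlog hlt : k1 < k2 generalizing k1 k2
  · exact this k2 hk2 k1 hk1 hne.symm heq.symm (by omega)
  refine ⟨k2 - k1, fun i => ⌊(k2 : ℝ) * x i⌋ - ⌊(k1 : ℝ) * x i⌋, by omega,
    by simp at hk2; omega, fun i => ?_⟩
  have h1 : ((k2 - k1 : ℕ) : ℝ) * x i - ((⌊(k2 : ℝ) * x i⌋ - ⌊(k1 : ℝ) * x i⌋ : ℤ) : ℝ)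
      = Int.fract ((k2 : ℝ) * x i) - Int.fract ((k1 : ℝ) * x i) := by
    unfold Int.fract
    push_cast [Nat.cast_sub hlt.le]
    ring
  rw [h1]
  have h2 : ⌊(Q : ℝ) * Int.fract ((k1 : ℝ) * x i)⌋ = ⌊(Q : ℝ) * Int.fract ((k2 : ℝ) * x i)⌋ :=
    congrFun heq i
  have h3 := Int.abs_sub_lt_one_of_floor_eq_floor h2
  rw [← mul_sub, abs_mul, abs_of_pos hQ0] at h3
  rw [le_div_iff₀ hQ0, abs_sub_comm]
  linarith

/-- Let `Q ≥ 2` be an integer and `φ = (a I_r | L) ∈ M_{r×g}(ℤ)` a Gauss-reduced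
matrix (`a = H(φ) > 0` is the maximal absolute value of the entries, and the entries have
gcd 1). Set `n = rg - r² + 1`. Then there is a Gauss-reduced matrix `ψ = (f I_r | L')` with
`H(ψ) = f ≤ Q^n` and `|ψ/f - φ/a| ≤ Q^{-1/2} f^{-1 - 1/(2n)}` (entrywise). -/
theorem stmt_7 (g r : ℕ) (hrg : r ≤ g) (hr : 0 < r)
    (Q : ℕ) (hQ : 2 ≤ Q)
    (φ : Matrix (Fin r) (Fin g) ℤ) (a : ℤ) (ha : 0 < a)
    (hid : ∀ i j : Fin r, φ i (Fin.castLE hrg j) = if i = j then a else 0)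
    (hH : ∀ i j, |φ i j| ≤ a)
    (hgcd : ∀ d : ℤ, (∀ i j, d ∣ φ i j) → IsUnit d) :
    ∃ (ψ : Matrix (Fin r) (Fin g) ℤ) (f : ℤ),
      0 < f ∧
      (∀ i j : Fin r, ψ i (Fin.castLE hrg j) = if i = j then f else 0) ∧
      (∀ i j, |ψ i j| ≤ f) ∧
      (∀ d : ℤ, (∀ i j, d ∣ ψ i j) → IsUnit d) ∧
      f ≤ (Q : ℤ) ^ (r * g - r ^ 2 + 1) ∧
      ∀ i j, |(ψ i j : ℝ) / (f : ℝ) - (φ i j : ℝ) / (a : ℝ)| ≤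
        (Q : ℝ) ^ (-(1 : ℝ) / 2) *
          (f : ℝ) ^ (-(1 : ℝ) - 1 / (2 * ((r * g - r ^ 2 + 1 : ℕ) : ℝ))) := by
  have ha0 : (0:ℝ) < (a:ℝ) := by exact_mod_cast ha
  have hQ0 : (0:ℝ) < (Q:ℝ) := by positivity
  set n : ℕ := r * g - r ^ 2 + 1 with hn
  have hnN : n = r * (g - r) + 1 := by
    have e : r * (g - r) + r * r = r * g := by
      rw [← Nat.mul_add, Nat.sub_add_cancel hrg]
    have e2 : r ^ 2 = r * r := pow_two r
    omega
  -- the numbers to approximate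
  set x : Fin r × Fin (g - r) → ℝ :=
    fun q => ((φ q.1 ⟨r + (q.2 : ℕ), by have := q.2.isLt; omega⟩ : ℤ) : ℝ) / (a : ℝ) with hx
  obtain ⟨f0, p, hf0pos, hf0le, hp⟩ := dirichlet_simul x Q hQ
  have hcard : Fintype.card (Fin r × Fin (g - r)) = r * (g - r) := by simp
  rw [hcard] at hf0le
  have hf0R : (0:ℝ) < (f0:ℝ) := by exact_mod_cast hf0pos
  have hxabs : ∀ q, |x q| ≤ 1 := by
    intro q
    rw [hx, abs_div, abs_of_pos ha0, div_le_one ha0]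
    exact_mod_cast hH _ _
  -- the unreduced matrix
  set ψ0 : Matrix (Fin r) (Fin g) ℤ := fun i j =>
    if h : (j : ℕ) < r then (if (i:ℕ) = (j:ℕ) then (f0:ℤ) else 0)
    else p (i, ⟨(j:ℕ) - r, by have := j.isLt; omega⟩) with hψ0
  have hψ0id : ∀ i j : Fin r, ψ0 i (Fin.castLE hrg j) = if i = j then (f0:ℤ) else 0 := by
    intro i j
    rw [hψ0]
    simp only [Fin.coe_castLE]
    rw [dif_pos j.isLt]
    congr 1
    simp [Fin.ext_iff]
  have hψ0abs : ∀ i j, |ψ0 i j| ≤ (f0:ℤ) := by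
    intro i j
    simp only [hψ0]
    split
    · split <;> simp [Int.abs_natCast]
    · next h =>
      have hjr : (j:ℕ) - r < g - r := by have := j.isLt; omega
      set q : Fin r × Fin (g - r) := (i, ⟨(j:ℕ) - r, hjr⟩)
      have h1 := hp q
      have h2 := hxabs q
      have h3 : |(p q : ℝ)| ≤ (f0:ℝ) * 1 + 1/Q := by
        calc |(p q : ℝ)| = |(f0:ℝ) * x q - ((f0:ℝ) * x q - p q)| := by ring_nf
          _ ≤ |(f0:ℝ) * x q| + |(f0:ℝ) * x q - p q| := abs_sub _ _
          _ ≤ (f0:ℝ) * 1 + 1/Q := by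
              refine add_le_add ?_ h1
              rw [abs_mul, abs_of_pos hf0R]
              exact mul_le_mul_of_nonneg_left h2 hf0R.le
      have h4 : (1:ℝ)/Q < 1 := by
        rw [div_lt_one hQ0]; exact_mod_cast by omega
      have h5 : |(p q : ℝ)| < (f0:ℝ) + 1 := by linarith
      have h6 : |p q| < (f0:ℤ) + 1 := by exact_mod_cast h5
      have h7 : |p q| ≤ (f0:ℤ) := by omega
      exact h7
  have hψ0err : ∀ i j, |(ψ0 i j : ℝ) / (f0 : ℝ) - (φ i j : ℝ) / (a : ℝ)| ≤
      1 / ((f0:ℝ) * Q) := by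
    intro i j
    by_cases h : (j : ℕ) < r
    · have hj : j = Fin.castLE hrg ⟨(j:ℕ), h⟩ := by simp [Fin.ext_iff]
      have hφ := hid i ⟨(j:ℕ), h⟩
      rw [← hj] at hφ
      have hψ := hψ0id i ⟨(j:ℕ), h⟩
      rw [← hj] at hψ
      rw [hφ, hψ]
      by_cases hij : i = (⟨(j:ℕ), h⟩ : Fin r) <;>
        simp [hij, ha0.ne', hf0R.ne'] <;> positivity
    · have hjr : (j:ℕ) - r < g - r := by have := j.isLt; omega
      set q : Fin r × Fin (g - r) := (i, ⟨(j:ℕ) - r, hjr⟩) with hq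
      have hψ : ψ0 i j = p q := by simp only [hψ0]; rw [dif_neg h]
      have hxq : x q = (φ i j : ℝ) / a := by
        rw [hx]
        simp only [hq]
        congr 3
        apply Fin.ext
        simp
        omega
      rw [hψ, ← hxq]
      have h1 := hp q
      have h2 : (p q : ℝ) / f0 - x q = -(((f0:ℝ) * x q - p q) / f0) := by
        field_simp
        ring
      rw [h2, abs_neg, abs_div, abs_of_pos hf0R]
      calc |(f0:ℝ) * x q - p q| / f0 ≤ (1/Q) / f0 := by
            exact div_le_div_of_nonneg_right h1 hf0R.le
        _ = 1 / ((f0:ℝ) * Q) := by rw [div_div, mul_comm]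
  -- reduce by the gcd
  set d : ℤ := Finset.univ.gcd (fun q : Fin r × Fin g => ψ0 q.1 q.2) with hd
  have hddvd : ∀ i j, d ∣ ψ0 i j := fun i j =>
    Finset.gcd_dvd (Finset.mem_univ (⟨i, j⟩ : Fin r × Fin g))
  have hi0 : (0:ℕ) < r := hr
  have hdf0 : d ∣ (f0:ℤ) := by
    have h1 := hψ0id ⟨0, hr⟩ ⟨0, hr⟩
    rw [if_pos rfl] at h1
    have h2 := hddvd ⟨0, hr⟩ (Fin.castLE hrg ⟨0, hr⟩)
    rwa [h1] at h2
  have hdne : d ≠ 0 := by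
    intro h0
    rw [h0] at hdf0
    have : (f0:ℤ) = 0 := zero_dvd_iff.mp hdf0
    omega
  have hdpos : 0 < d := by
    have hnorm : normalize d = d := Finset.normalize_gcd
    have : |d| = d := by rw [Int.abs_eq_normalize]; exact hnorm
    rcases lt_trichotomy d 0 with h | h | h
    · rw [abs_of_neg h] at this; omega
    · exact absurd h hdne
    · exact h
  set f : ℤ := (f0:ℤ) / d with hf
  set ψ : Matrix (Fin r) (Fin g) ℤ := fun i j => ψ0 i j / d with hψdef
  have hfd : d * f = (f0:ℤ) := Int.mul_ediv_cancel' hdf0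
  have hψd : ∀ i j, d * ψ i j = ψ0 i j := fun i j => Int.mul_ediv_cancel' (hddvd i j)
  have hfpos : 0 < f := by
    rcases le_or_gt f 0 with h | h
    · nlinarith
    · exact h
  have hfR : (0:ℝ) < (f:ℝ) := by exact_mod_cast hfpos
  have hdR : (0:ℝ) < (d:ℝ) := by exact_mod_cast hdpos
  have hffle : f ≤ (f0:ℤ) := Int.le_of_dvd (by exact_mod_cast hf0pos) ⟨d, by linarith [hfd]⟩
  have hnpos : 0 < n := by omega
  have hnR : (0:ℝ) < (n:ℝ) := by exact_mod_cast hnpos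
  refine ⟨ψ, f, hfpos, ?_, ?_, ?_, ?_, ?_⟩
  · intro i j
    simp only [hψdef]
    rw [hψ0id i j]
    split
    · rfl
    · exact Int.zero_ediv d
  · intro i j
    have h1 : d * |ψ i j| ≤ d * f := by
      rw [← abs_of_pos hdpos, ← abs_mul, hψd, abs_of_pos hdpos, hfd]
      exact hψ0abs i j
    exact le_of_mul_le_mul_left h1 hdpos
  · intro e he
    have h1 : d * e ∣ d := by
      apply Finset.dvd_gcd
      intro q _
      rw [← hψd q.1 q.2]
      exact mul_dvd_mul_left d (he q.1 q.2)
    obtain ⟨c, hc⟩ := h1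
    have : d * 1 = d * (e * c) := by linarith [hc]
    have h2 : (1:ℤ) = e * c := mul_left_cancel₀ hdne this
    exact IsUnit.of_mul_eq_one c h2.symm
  · have h1 : (f0:ℤ) ≤ (Q:ℤ) ^ n := by
      have : f0 ≤ Q ^ n := hf0le.trans (Nat.pow_le_pow_right (by omega) (by omega))
      exact_mod_cast this
    exact hffle.trans h1
  · intro i j
    have heq : (ψ i j : ℝ) / (f : ℝ) = (ψ0 i j : ℝ) / (f0 : ℝ) := by
      have h1 : ((ψ0 i j : ℤ) : ℝ) = (d:ℝ) * ((ψ i j : ℤ) : ℝ) := by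
        exact_mod_cast congrArg (Int.cast : ℤ → ℝ) (hψd i j).symm
      have h2 : ((f0:ℕ) : ℝ) = (d:ℝ) * ((f:ℤ) : ℝ) := by exact_mod_cast hfd.symm
      rw [h1, h2, mul_div_mul_left _ _ hdR.ne']
    rw [heq]
    refine (hψ0err i j).trans ?_
    -- main analytic inequality
    have hmain : (f0:ℝ) ^ ((1:ℝ)/(2*(n:ℝ))) ≤ (Q:ℝ) ^ ((1:ℝ)/2) := by
      have h1 : (f0:ℝ) ≤ (Q:ℝ) ^ ((n:ℝ)) := by
        rw [Real.rpow_natCast]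
        exact_mod_cast hf0le.trans (Nat.pow_le_pow_right (by omega) (by omega))
      calc (f0:ℝ) ^ ((1:ℝ)/(2*(n:ℝ))) ≤ ((Q:ℝ) ^ ((n:ℝ))) ^ ((1:ℝ)/(2*(n:ℝ))) :=
            Real.rpow_le_rpow hf0R.le h1 (by positivity)
        _ = (Q:ℝ) ^ ((n:ℝ) * ((1:ℝ)/(2*(n:ℝ)))) := by rw [← Real.rpow_mul hQ0.le]
        _ = (Q:ℝ) ^ ((1:ℝ)/2) := by
            congr 1
            field_simp
    set c : ℝ := 1 / (2 * (n:ℝ)) with hcdef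
    have hc0 : 0 < c := by positivity
    have step1 : (1:ℝ) / ((f0:ℝ) * Q) ≤
        (Q:ℝ) ^ (-(1:ℝ)/2) * (f0:ℝ) ^ (-(1:ℝ) - c) := by
      have e1 : (Q:ℝ) ^ (-(1:ℝ)/2) = ((Q:ℝ) ^ ((1:ℝ)/2))⁻¹ := by
        rw [neg_div, Real.rpow_neg hQ0.le]
      have e2 : (f0:ℝ) ^ (-(1:ℝ) - c) = ((f0:ℝ) * (f0:ℝ) ^ c)⁻¹ := by
        rw [show -(1:ℝ) - c = -(1 + c) by ring, Real.rpow_neg hf0R.le,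
          Real.rpow_add hf0R, Real.rpow_one]
      rw [e1, e2, ← mul_inv, one_div]
      apply inv_anti₀ (by positivity)
      have hq : (Q:ℝ) ^ ((1:ℝ)/2) * (Q:ℝ) ^ ((1:ℝ)/2) = Q := by
        rw [← Real.rpow_add hQ0]
        norm_num
      calc (Q:ℝ) ^ ((1:ℝ)/2) * ((f0:ℝ) * (f0:ℝ) ^ c)
          ≤ (Q:ℝ) ^ ((1:ℝ)/2) * ((f0:ℝ) * (Q:ℝ) ^ ((1:ℝ)/2)) := by
            refine mul_le_mul_of_nonneg_left ?_ (by positivity)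
            exact mul_le_mul_of_nonneg_left hmain hf0R.le
        _ = (f0:ℝ) * ((Q:ℝ) ^ ((1:ℝ)/2) * (Q:ℝ) ^ ((1:ℝ)/2)) := by ring
        _ = (f0:ℝ) * Q := by rw [hq]
    refine step1.trans ?_
    apply mul_le_mul_of_nonneg_left _ (by positivity)
    exact Real.rpow_le_rpow_of_nonpos hfR (by exact_mod_cast hffle) (by linarith)
end

section
/- Let $C$ be a transverse curve in $E^g$ and $\Gamma$ a subgroup of finite rank of $E^g(\overline{\mathbb{Q}})$. If $C$ is transverse and the points $\gamma_1, \dots, \gamma_s$ are $\mathrm{End}(E)$-linearly independent in $E(\overline{\mathbb{Q}})$, then the curve $C' = C \times (\gamma_1, \dots, \gamma_s) \subset E^{g+s}$ is weak-transverse, i.e., $C'$ is not contained in any proper algebraic subgroup of $E^{g+s}$. -/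
/-- Let `C ⊆ E^g` be a transverse curve (not contained in any translate of a
proper algebraic subgroup: for every nonzero morphism `φ : E^g → E` and every point `c`, the
function `x ↦ φ(x)` is not constantly `c` on `C`) and let `γ₁, …, γₛ ∈ E(ℚ̄)` be
`End(E) = ℤ`-linearly independent (no CM). Then `C' = C × (γ₁, …, γₛ) ⊆ E^{g+s}` is
weak-transverse: it is not contained in the kernel of any nonzero morphism
`(ψ | ψ') : E^{g+s} → E`. -/
theorem stmt_11 (g s : ℕ) (hg : 0 < g)
    (G : Type) [AddCommGroup G]
    (C : Set (Fin g → G))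
    (γ : Fin s → G) (hγ : LinearIndependent ℤ γ)
    (htrans : ∀ φ : Fin g → ℤ, φ ≠ 0 → ∀ c : G, ∃ x ∈ C, ∑ j, φ j • x j ≠ c) :
    ∀ (ψ : Fin g → ℤ) (ψ' : Fin s → ℤ), ¬(ψ = 0 ∧ ψ' = 0) →
      ∃ x ∈ C, (∑ j, ψ j • x j) + ∑ i, ψ' i • γ i ≠ 0 := by
  intro ψ ψ' h
  by_cases hψ : ψ = 0
  · -- ψ = 0, so ψ' ≠ 0 and ∑ ψ' i • γ i ≠ 0 by linear independence
    have hψ' : ψ' ≠ 0 := fun h' => h ⟨hψ, h'⟩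
    have hne : (∑ i, ψ' i • γ i) ≠ 0 := by
      intro h0
      exact hψ' (funext fun i =>
        linearIndependent_iff'.mp hγ Finset.univ ψ' h0 i (Finset.mem_univ i))
    -- get a point of C using htrans with a nonzero φ
    have hφ : (fun j : Fin g => if j = ⟨0, hg⟩ then (1 : ℤ) else 0) ≠ 0 := by
      intro h0
      have := congrFun h0 ⟨0, hg⟩
      simp at this
    obtain ⟨x, hx, -⟩ := htrans _ hφ 0
    refine ⟨x, hx, ?_⟩
    simpa [hψ] using hne
  · obtain ⟨x, hx, hne⟩ := htrans ψ hψ (-(∑ i, ψ' i • γ i))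
    exact ⟨x, hx, fun h0 => hne (add_eq_zero_iff_eq_neg.mp h0)⟩
end

section
/- Let $C$ be a transverse curve in $E^g$ over $\overline{\mathbb{Q}}$, $\Gamma = \langle (y_1, 0, \dots, 0) \rangle$ where $y_1 \in E(\overline{\mathbb{Q}})$ is a non-torsion point. Then the set $S_1(C, \Gamma) = C(\overline{\mathbb{Q}}) \cap \bigcup_{\mathrm{cod}\, B \ge 1}(B + \Gamma)$ does not have bounded Néron–Tate height. Specifically, since the projection $\pi_1: C \to E$ onto the first factor is surjective, for every $n \in \mathbb{N}$ there exists $x_n \in C(\overline{\mathbb{Q}})$ with $\pi_1(x_n) = [n]y_1$, and $x_n \in B_{(1,0,\dots,0)} + \Gamma$, while $h(x_n) \ge h([n]y_1) = n^2 h(y_1) \to \infty$. -/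
/-- Let `C ⊆ E^g` be a transverse curve whose projection to the first factor is
surjective, and `Γ = ⟨(y₁, 0, …, 0)⟩` with `y₁ ∈ E(ℚ̄)` non-torsion. Then
`S₁(C, Γ) = C(ℚ̄) ∩ ⋃_{cod B ≥ 1} (B + Γ)` does not have bounded Néron–Tate height:
for every `M` there is `x ∈ C` lying in `B_{(1,0,…,0)} + Γ` (i.e. `x = b + k•(y₁,0,…,0)`
with `b` in the kernel `{b : b₁ = 0}`) whose first coordinate has norm `> M`. The norm `nm`
satisfies `nm (n • x) = |n| nm x`, is nonnegative, and vanishes only on torsion points. -/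
theorem stmt_12 (g : ℕ) (hg : 0 < g)
    (G : Type) [AddCommGroup G] (nm : G → ℝ)
    (hnm_nonneg : ∀ x : G, 0 ≤ nm x)
    (hnm_smul : ∀ (n : ℤ) (x : G), nm (n • x) = |(n : ℝ)| * nm x)
    (hnm_zero : ∀ x : G, nm x = 0 → ∃ n : ℤ, n ≠ 0 ∧ n • x = 0)
    (C : Set (Fin g → G))
    (y₁ : G) (hy₁ : ∀ n : ℤ, n ≠ 0 → n • y₁ ≠ 0)
    (hsurj : ∀ z : G, ∃ x ∈ C, x ⟨0, hg⟩ = z) :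
    ∀ M : ℝ, ∃ x ∈ C,
      (∃ (k : ℤ) (b : Fin g → G), b ⟨0, hg⟩ = 0 ∧
        x = b + k • (fun j => if j = ⟨0, hg⟩ then y₁ else 0)) ∧
      M < nm (x ⟨0, hg⟩) := by
  intro M
  have hpos : 0 < nm y₁ := by
    rcases lt_or_eq_of_le (hnm_nonneg y₁) with h | h
    · exact h
    · exfalso
      rcases hnm_zero y₁ h.symm with ⟨n, hn, hn0⟩
      exact hy₁ n hn hn0
  obtain ⟨n, hn⟩ := exists_nat_gt (M / nm y₁)
  have hM : M < (n : ℝ) * nm y₁ := by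
    have := (div_lt_iff₀ hpos).mp hn
    linarith
  obtain ⟨x, hxC, hx0⟩ := hsurj ((n : ℤ) • y₁)
  refine ⟨x, hxC, ⟨(n : ℤ), x - (n : ℤ) • (fun j => if j = ⟨0, hg⟩ then y₁ else 0), ?_, ?_⟩, ?_⟩
  · simp [hx0]
  · abel
  · rw [hx0, hnm_smul]
    simpa using hM
end

section
/- Let $\phi: E^g \to E^2$ be a Gauss-reduced morphism of rank 2 of the form $(aI_2|L)$, and let $G \subset E^2 \times \{0\}^{g-2} \subset E^g$ be any subset. Then every point $x \in B_\phi + G$ can be written as $x = P + \theta$ with $P \in B_\phi$, $\theta \in G$, and $\max(\|\theta\|, \|P\|) \le (g+1)\|P + \theta\|$. -/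
/-- Let `φ = (a I₂ | L) : E^g → E²` be a Gauss-reduced morphism of rank 2 and
`T ⊆ E² × {0}^{g-2} ⊆ E^g` any subset. Then every `x ∈ B_φ + T` can be written `x = P + θ`
with `P ∈ B_φ`, `θ ∈ T` and `max(‖θ‖, ‖P‖) ≤ (g+1) ‖P + θ‖`, the tuple norm being the
maximum of the coordinate Néron–Tate norms (expressed via an arbitrary bound `c`). -/
theorem stmt_13 (g : ℕ) (hg : 2 ≤ g)
    (G : Type) [AddCommGroup G] (nm : G → ℝ)
    (hnm0 : nm 0 = 0)
    (hnm_nonneg : ∀ x : G, 0 ≤ nm x)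
    (hnm_add : ∀ x y : G, nm (x + y) ≤ nm x + nm y)
    (hnm_smul : ∀ (n : ℤ) (x : G), nm (n • x) = |(n : ℝ)| * nm x)
    (A : Matrix (Fin 2) (Fin g) ℤ) (a : ℤ) (ha : 0 < a)
    (hid : ∀ i j : Fin 2, A i (Fin.castLE hg j) = if i = j then a else 0)
    (hH : ∀ i j, |A i j| ≤ a)
    (T : Set (Fin g → G))
    (hT : ∀ θ ∈ T, ∀ j : Fin g, 2 ≤ (j : ℕ) → θ j = 0)
    (x : Fin g → G)
    (hx : ∃ P θ, (∀ i, ∑ j, A i j • P j = 0) ∧ θ ∈ T ∧ x = P + θ) :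
    ∃ P θ, (∀ i, ∑ j, A i j • P j = 0) ∧ θ ∈ T ∧ x = P + θ ∧
      ∀ c : ℝ, 0 ≤ c → (∀ j, nm (x j) ≤ c) →
        (∀ j, nm (θ j) ≤ (g + 1) * c) ∧ (∀ j, nm (P j) ≤ (g + 1) * c) := by
  obtain ⟨P, θ, hP, hθT, hxe⟩ := hx
  refine ⟨P, θ, hP, hθT, hxe, ?_⟩
  intro c hc hxc
  have ha' : (0:ℝ) < (a:ℝ) := by exact_mod_cast ha
  -- key bound: nm (θ j) ≤ g * c for all j
  have key : ∀ j : Fin g, nm (θ j) ≤ g * c := by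
    intro j
    by_cases h2j : 2 ≤ (j : ℕ)
    · rw [hT θ hθT j h2j, hnm0]
      positivity
    · push_neg at h2j
      set i : Fin 2 := ⟨j, h2j⟩ with hi
      have hji : Fin.castLE hg i = j := by
        apply Fin.ext; rfl
      have hsum : ∑ k, A i k • x k = a • θ j := by
        have hθsum : ∑ k, A i k • θ k = a • θ j := by
          rw [Finset.sum_eq_single (Fin.castLE hg i)]
          · rw [hid i i, if_pos rfl, hji]
          · intro k _ hk
            by_cases h2k : 2 ≤ (k : ℕ)
            · rw [hT θ hθT k h2k, smul_zero]
            · push_neg at h2k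
              have : A i k = 0 := by
                have hk' : k = Fin.castLE hg ⟨k, h2k⟩ := by apply Fin.ext; rfl
                rw [hk', hid i ⟨k, h2k⟩, if_neg]
                intro h
                apply hk
                rw [hk', ← h, hji]
              rw [this, zero_smul]
          · intro h
            exact absurd (Finset.mem_univ _) h
        rw [hxe]
        simp only [Pi.add_apply, smul_add, Finset.sum_add_distrib, hP i, zero_add]
        exact hθsum
      have h1 : (a:ℝ) * nm (θ j) ≤ ∑ k, nm (A i k • x k) := by
        calc (a:ℝ) * nm (θ j) = |(a:ℝ)| * nm (θ j) := by rw [abs_of_pos ha']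
        _ = nm (a • θ j) := (hnm_smul a (θ j)).symm
        _ = nm (∑ k, A i k • x k) := by rw [hsum]
        _ ≤ ∑ k, nm (A i k • x k) := nm_sum_le nm hnm0 hnm_add _ _
      have h2 : ∑ k, nm (A i k • x k) ≤ (g : ℝ) * ((a:ℝ) * c) := by
        calc ∑ k, nm (A i k • x k) ≤ ∑ _k : Fin g, (a:ℝ) * c := by
              apply Finset.sum_le_sum
              intro k _
              rw [hnm_smul]
              have h3 : |((A i k : ℤ) : ℝ)| ≤ (a:ℝ) := by
                rw [← Int.cast_abs]; exact_mod_cast hH i k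
              exact mul_le_mul h3 (hxc k) (hnm_nonneg _) (le_of_lt ha')
          _ = (g : ℝ) * ((a:ℝ) * c) := by simp [mul_comm]
      have := le_trans h1 h2
      have hfin : (a:ℝ) * nm (θ j) ≤ (a:ℝ) * ((g:ℝ) * c) := by linarith [this]
      exact le_of_mul_le_mul_left (by linarith) ha'
  constructor
  · intro j
    have := key j
    nlinarith [hc]
  · intro j
    have hPj : P j = x j + (-1 : ℤ) • θ j := by
      rw [hxe]; simp
    rw [hPj]
    have h4 := hnm_add (x j) ((-1 : ℤ) • θ j)
    rw [hnm_smul] at h4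
    have := key j
    have := hxc j
    simp only [Int.cast_neg, Int.cast_one, abs_neg, abs_one, one_mul] at h4
    nlinarith
end

section
/- A surjective morphism $\tilde\phi: E^{g+s} \to E^r$ (identified with a matrix over $\mathrm{End}(E) = \mathbb{Z}$) is special — meaning $\tilde\phi = (N\phi|\phi')$ with $N \in \mathbb{Z}_{>0}$, $\phi = (aI_r|L)$ Gauss-reduced of rank $r$, gcd of entries of $\tilde\phi$ equal to 1, and $H(\tilde\phi) = N H(\phi)$ — if and only if $\tilde\phi$ is Gauss-reduced and $H(\tilde\phi)I_r$ is a submatrix of the matrix consisting of the first $g$ columns of $\tilde\phi$. -/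
/-- A surjective morphism `φ̃ : E^{g+s} → E^r` (an integer matrix, `End(E) = ℤ`
since `E` has no CM) is *special* — i.e. `φ̃ = (N φ | φ')` with `N > 0`, `φ = (a I_r | L)`
Gauss-reduced of rank `r`, the entries of `φ̃` have gcd 1, and `H(φ̃) = N H(φ)` — if and only
if `φ̃` is Gauss-reduced and `H(φ̃) I_r` is a submatrix of the matrix consisting of the first
`g` columns of `φ̃`. (Identity submatrices are located by an injective column selection `σ`;
`H` is the maximum absolute value of the entries.) -/
theorem stmt_14 (g s r : ℕ)
    (Atil : Matrix (Fin r) (Fin (g + s)) ℤ) :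
    (∃ (N a : ℤ) (φ : Matrix (Fin r) (Fin g) ℤ) (σ : Fin r → Fin g),
      0 < N ∧ 0 < a ∧ Function.Injective σ ∧
      (∀ i j : Fin r, φ i (σ j) = if i = j then a else 0) ∧
      (∀ i j, |φ i j| ≤ a) ∧
      (∀ d : ℤ, (∀ i j, d ∣ φ i j) → IsUnit d) ∧
      (∀ i (j : Fin g), Atil i (Fin.castAdd s j) = N * φ i j) ∧
      (∀ d : ℤ, (∀ i j, d ∣ Atil i j) → IsUnit d) ∧
      (∀ i j, |Atil i j| ≤ N * a))
    ↔
    (∃ (b : ℤ) (σ : Fin r → Fin g),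
      0 < b ∧ Function.Injective σ ∧
      (∀ i j, |Atil i j| ≤ b) ∧
      (∀ d : ℤ, (∀ i j, d ∣ Atil i j) → IsUnit d) ∧
      (∀ i j : Fin r, Atil i (Fin.castAdd s (σ j)) = if i = j then b else 0)) := by
  constructor
  · rintro ⟨N, a, φ, σ, hN, ha, hσ, hid, hbd, hgcdφ, hcol, hgcdA, hbdA⟩
    refine ⟨N * a, σ, by positivity, hσ, hbdA, hgcdA, fun i j => ?_⟩
    rw [hcol i (σ j), hid i j, mul_ite, mul_zero]
  · rintro ⟨b, σ, hb, hσ, hbd, hgcdA, hid⟩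
    rcases Nat.eq_zero_or_pos r with hr | hr
    · exfalso
      have : IsUnit (2 : ℤ) := hgcdA 2 (fun i j => absurd i.2 (by omega))
      rw [Int.isUnit_iff] at this; omega
    set N : ℤ := (Finset.univ : Finset (Fin r × Fin g)).gcd
        (fun p => Atil p.1 (Fin.castAdd s p.2)) with hNdef
    have hNdvd : ∀ (i : Fin r) (j : Fin g), N ∣ Atil i (Fin.castAdd s j) := by
      intro i j
      exact Finset.gcd_dvd (Finset.mem_univ (i, j))
    obtain ⟨i0, _⟩ : ∃ i : Fin r, True := ⟨⟨0, hr⟩, trivial⟩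
    have hNb : N ∣ b := by
      have := hNdvd i0 (σ i0)
      rwa [hid i0 i0, if_pos rfl] at this
    have hNnn : 0 ≤ N := by
      rw [hNdef, ← Finset.normalize_gcd, ← Int.abs_eq_normalize]
      exact abs_nonneg _
    have hN0 : N ≠ 0 := by
      intro h
      rw [h] at hNb
      have := zero_dvd_iff.mp hNb
      omega
    have hNpos : 0 < N := lt_of_le_of_ne hNnn (Ne.symm hN0)
    obtain ⟨a, hab⟩ := hNb
    have hapos : 0 < a := by nlinarith
    refine ⟨N, a, fun i j => Atil i (Fin.castAdd s j) / N, σ, hNpos, hapos, hσ,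
      ?_, ?_, ?_, ?_, hgcdA, ?_⟩
    · intro i j
      simp only
      rw [hid i j]
      split
      · rw [hab, Int.mul_ediv_cancel_left _ hN0]
      · exact Int.zero_ediv N
    · intro i j
      obtain ⟨c, hc⟩ := hNdvd i j
      simp only
      rw [hc, Int.mul_ediv_cancel_left _ hN0]
      have h1 : |Atil i (Fin.castAdd s j)| ≤ b := hbd i (Fin.castAdd s j)
      rw [hc, hab, abs_mul, abs_of_pos hNpos] at h1
      exact le_of_mul_le_mul_left h1 hNpos
    · intro d hd
      have hdN : ∀ p : Fin r × Fin g, d * N ∣ Atil p.1 (Fin.castAdd s p.2) := by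
        intro ⟨i, j⟩
        obtain ⟨c, hc⟩ := hd i j
        simp only at hc
        obtain ⟨e, he⟩ := hNdvd i j
        rw [he, Int.mul_ediv_cancel_left _ hN0] at hc
        exact ⟨c, by rw [he, hc]; ring⟩
      have : d * N ∣ N := Finset.dvd_gcd (fun p _ => hdN p)
      obtain ⟨k, hk⟩ := this
      have : d * k = 1 := by
        have : N * 1 = N * (d * k) := by rw [mul_one]; nlinarith [hk]
        have := mul_left_cancel₀ hN0 this
        omega
      exact IsUnit.of_mul_eq_one k this
    · intro i j
      exact (Int.mul_ediv_cancel' (hNdvd i j)).symm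
    · intro i j
      rw [← hab]
      exact hbd i j
end

section
/- For an algebraic curve $C$ in $E^g$ over $\overline{\mathbb{Q}}$, any subgroup $\Gamma_0^g$-neighborhood, and any $\varepsilon \ge 0$: $S_r(C, (\Gamma_0^g)_\varepsilon) = \bigcup_{\phi \text{ Gauss-reduced, rk}\,\phi = r} C(\overline{\mathbb{Q}}) \cap (B_\phi + (\Gamma_0^g)_\varepsilon)$, i.e., in the definition of $S_r$ it suffices to take the union over kernels of Gauss-reduced morphisms of rank exactly $r$. -/
set_option maxHeartbeats 1000000

open Matrix Set Submodule

lemma aux_exists_minor {r g : ℕ} (A : Matrix (Fin r) (Fin g) ℚ) (h : A.rank = r) :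
    ∃ σ : Fin r → Fin g, (A.submatrix id σ).det ≠ 0 := by
  have hspan : span ℚ (Set.range Aᵀ) = ⊤ := by
    apply Submodule.eq_top_of_finrank_eq
    rw [show span ℚ (Set.range Aᵀ) = span ℚ (Set.range A.col) from rfl,
      ← Matrix.rank_eq_finrank_span_cols, h, Module.finrank_fintype_fun_eq_card,
      Fintype.card_fin]
  obtain ⟨t, hts, htspan, htli⟩ := exists_linearIndependent ℚ (Set.range Aᵀ)
  rw [hspan] at htspan
  have htfin : t.Finite := by
    have : Finite ↥t := htli.finite
    exact Set.toFinite t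
  haveI : Fintype ↥t := htfin.fintype
  have hcard : Fintype.card ↥t = r := by
    have := finrank_span_set_eq_card htli
    rw [htspan] at this
    rw [← Set.toFinset_card]
    simp only [Set.toFinset_card] at this ⊢
    rw [← this, finrank_top, Module.finrank_fintype_fun_eq_card, Fintype.card_fin]
  obtain ⟨e⟩ : Nonempty (Fin r ≃ ↥t) := by
    refine ⟨(Fintype.equivFinOfCardEq hcard).symm⟩
  choose σ hσ using fun i : Fin r => hts (e i).2
  refine ⟨σ, ?_⟩
  have hcols : ∀ k : Fin r, (A.submatrix id σ)ᵀ k = ((e k : Fin r → ℚ)) := by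
    intro k; funext i
    have := hσ k
    exact congrFun this i
  have hli : LinearIndependent ℚ (fun k => (A.submatrix id σ)ᵀ k) := by
    rw [show (fun k => (A.submatrix id σ)ᵀ k) = fun k => ((e k : Fin r → ℚ)) from funext hcols]
    exact htli.comp e e.injective
  have : IsUnit (A.submatrix id σ) := Matrix.linearIndependent_cols_iff_isUnit.mp hli
  exact ((Matrix.isUnit_iff_isUnit_det _).mp this).ne_zero

lemma aux_rank_eq {r g : ℕ} (A : Matrix (Fin r) (Fin g) ℚ) (σ : Fin r → Fin g) (a : ℚ)
    (ha : a ≠ 0) (hσA : ∀ i j : Fin r, A i (σ j) = if i = j then a else 0) :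
    A.rank = r := by
  refine le_antisymm (by simpa using A.rank_le_card_height) ?_
  set P : Matrix (Fin g) (Fin r) ℚ := Matrix.of fun j k => if j = σ k then 1 else 0 with hP
  have hAP : A * P = Matrix.diagonal (fun _ => a) := by
    ext i k
    simp only [Matrix.mul_apply, hP, Matrix.of_apply, mul_ite, mul_one, mul_zero,
      Finset.sum_ite_eq' Finset.univ (σ k), Finset.mem_univ, if_true]
    rw [hσA i k, Matrix.diagonal_apply]
  have hunit : IsUnit (A * P) := by
    rw [hAP, Matrix.isUnit_iff_isUnit_det, Matrix.det_diagonal, Finset.prod_const]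
    exact (isUnit_iff_ne_zero.mpr ha).pow _
  have h1 : (A * P).rank = r := by
    rw [Matrix.rank_of_isUnit _ hunit, Fintype.card_fin]
  calc (r : ℕ) = (A * P).rank := h1.symm
    _ ≤ A.rank := Matrix.rank_mul_le_left A P
set_option maxHeartbeats 1000000 in
lemma aux_gauss {r g : ℕ} (hr : 0 < r) (A : Matrix (Fin r) (Fin g) ℤ)
    (hrk : ∃ σ0 : Fin r → Fin g, (A.submatrix id σ0).det ≠ 0) :
    ∃ (A' : Matrix (Fin r) (Fin g) ℤ) (a : ℤ) (σ : Fin r → Fin g) (d : ℤ)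
      (S : Matrix (Fin r) (Fin r) ℤ),
      0 < a ∧ Function.Injective σ ∧
      (∀ i j : Fin r, A' i (σ j) = if i = j then a else 0) ∧
      (∀ i j, |A' i j| ≤ a) ∧
      (∀ e : ℤ, (∀ i j, e ∣ A' i j) → IsUnit e) ∧
      0 < d ∧
      (∀ i j, d * A' i j = ∑ k, S i k * A k j) := by
  obtain ⟨σ0, hσ0⟩ := hrk
  obtain ⟨σ, -, hmax⟩ := Finset.exists_max_image (Finset.univ : Finset (Fin r → Fin g))
    (fun τ => |(A.submatrix id τ).det|) ⟨σ0, Finset.mem_univ _⟩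
  have hmax' : ∀ τ, |(A.submatrix id τ).det| ≤ |(A.submatrix id σ).det| :=
    fun τ => hmax τ (Finset.mem_univ _)
  set M : Matrix (Fin r) (Fin r) ℤ := A.submatrix id σ with hM
  set D : ℤ := M.det with hD
  have hDne : D ≠ 0 := by
    intro h
    have := hmax' σ0
    rw [h, abs_zero] at this
    exact hσ0 (abs_nonpos_iff.mp this)
  set s : ℤ := if 0 ≤ D then 1 else -1 with hs
  have hsD : s * D = |D| := by
    rcases le_or_gt 0 D with h | h
    · rw [hs, if_pos h, one_mul, abs_of_nonneg h]
    · rw [hs, if_neg (not_le.mpr h), neg_one_mul, abs_of_neg h]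
  have hsabs : |s| = 1 := by
    rcases le_or_gt 0 D with h | h
    · simp [hs, if_pos h]
    · simp [hs, if_neg (not_le.mpr h)]
  set S : Matrix (Fin r) (Fin r) ℤ := s • M.adjugate with hS
  set E : Matrix (Fin r) (Fin g) ℤ := S * A with hE
  have hEsum : ∀ (i : Fin r) (j : Fin g), E i j = ∑ k, S i k * A k j := by
    intro i j; rw [hE, Matrix.mul_apply]
  have hEσ : ∀ i j : Fin r, E i (σ j) = if i = j then |D| else 0 := by
    intro i j
    have h1 : E i (σ j) = s * ((M.adjugate * M) i j) := by
      rw [hEsum, Matrix.mul_apply, Finset.mul_sum]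
      refine Finset.sum_congr rfl fun k _ => ?_
      rw [hS, Matrix.smul_apply, smul_eq_mul, mul_assoc]
      rfl
    rw [h1, Matrix.adjugate_mul, Matrix.smul_apply, Matrix.one_apply, smul_eq_mul]
    split_ifs with h
    · rw [mul_one, hsD]
    · rw [mul_zero, mul_zero]
  have hEbound : ∀ (i : Fin r) (j : Fin g), |E i j| ≤ |D| := by
    intro i j
    have hupd : M.updateCol i (fun k => A k j) = A.submatrix id (Function.update σ i j) := by
      ext k l
      rw [Matrix.updateCol_apply, Matrix.submatrix_apply, Function.update_apply]
      split_ifs <;> rfl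
    have hc : (M.updateCol i fun k => A k j).det
        = ∑ k, M.adjugate i k * A k j := by
      rw [← Matrix.cramer_apply, Matrix.cramer_eq_adjugate_mulVec]
      simp [Matrix.mulVec, dotProduct]
    have h1 : E i j = s * (A.submatrix id (Function.update σ i j)).det := by
      rw [← hupd, hc, hEsum, Finset.mul_sum]
      refine Finset.sum_congr rfl fun k _ => ?_
      rw [hS, Matrix.smul_apply, smul_eq_mul, mul_assoc]
    rw [h1, abs_mul, hsabs, one_mul]
    exact hmax' _
  have hσinj : Function.Injective σ := by
    intro i j hij
    by_contra hne
    apply hDne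
    refine Matrix.det_zero_of_column_eq hne fun k => ?_
    show A k (σ i) = A k (σ j)
    rw [hij]
  clear_value E S s D M
  set i0 : Fin r := ⟨0, hr⟩ with hi0def
  set d0 : ℤ := Finset.gcd Finset.univ (fun p : Fin r × Fin g => E p.1 p.2) with hd0
  set d : ℤ := |d0| with hd
  have hd_dvd : ∀ (i : Fin r) (j : Fin g), d ∣ E i j := by
    intro i j
    rw [hd, abs_dvd]
    exact Finset.gcd_dvd (Finset.mem_univ (i, j))
  have hDpos : 0 < |D| := abs_pos.mpr hDne
  have hdne : d ≠ 0 := by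
    intro h
    have h2 := hd_dvd i0 (σ i0)
    rw [h, zero_dvd_iff, hEσ, if_pos rfl] at h2
    exact hDpos.ne' h2
  have hdpos : 0 < d := lt_of_le_of_ne (abs_nonneg _) (Ne.symm hdne)
  set A' : Matrix (Fin r) (Fin g) ℤ := Matrix.of (fun i j => E i j / d) with hA'
  have hdA' : ∀ (i : Fin r) (j : Fin g), d * A' i j = E i j := by
    intro i j
    exact Int.mul_ediv_cancel' (hd_dvd i j)
  clear_value A'
  have hdvdD : d ∣ |D| := by
    have h2 := hd_dvd i0 (σ i0)
    rwa [hEσ, if_pos rfl] at h2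
  set a : ℤ := |D| / d with ha
  have hda : d * a = |D| := Int.mul_ediv_cancel' hdvdD
  have hapos : 0 < a := by
    rcases lt_trichotomy a 0 with h | h | h
    · nlinarith
    · rw [h, mul_zero] at hda; exact absurd hda.symm hDpos.ne'
    · exact h
  refine ⟨A', a, σ, d, S, hapos, hσinj, ?_, ?_, ?_, hdpos, ?_⟩
  · intro i j
    apply mul_left_cancel₀ hdne
    rw [hdA', hEσ]
    split_ifs
    · rw [hda]
    · rw [mul_zero]
  · intro i j
    have h1 : d * |A' i j| = |E i j| := by
      rw [← hdA' i j, abs_mul, abs_of_pos hdpos]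
    have h2 : d * |A' i j| ≤ d * a := by
      rw [h1, hda]; exact hEbound i j
    exact le_of_mul_le_mul_left h2 hdpos
  · intro e he
    have h1 : ∀ p : Fin r × Fin g, p ∈ (Finset.univ : Finset (Fin r × Fin g)) →
        d * e ∣ E p.1 p.2 := by
      intro p _
      rw [← hdA' p.1 p.2]
      exact mul_dvd_mul_left d (he p.1 p.2)
    have h2 : d * e ∣ d0 := Finset.dvd_gcd h1
    have h3 : d * e ∣ d * 1 := by
      rw [mul_one, hd]
      exact (dvd_abs _ _).mpr h2
    exact isUnit_of_dvd_one ((mul_dvd_mul_iff_left hdne).mp h3)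
  · intro i j
    rw [hdA', hEsum]


/-- For an algebraic curve `C ⊆ E^g` (`E` without CM, points `G` divisible,
Néron–Tate norm `nm`), a division-closed subgroup `Γ₀ ⊆ E(ℚ̄)` of finite rank and any
`ε ≥ 0`:
`S_r(C, (Γ₀^g)_ε) = ⋃_{φ Gauss-reduced, rk φ = r} C(ℚ̄) ∩ (B_φ + (Γ₀^g)_ε)`,
i.e. in the definition of `S_r` it suffices to take the union over kernels of Gauss-reduced
morphisms of rank exactly `r`. Algebraic subgroups of codimension `≥ r` are modelled by
kernels of rank-`r` integer matrices `E^g → E^r`; Gauss-reduced means `a I_r` is a submatrix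
up to column permutation, `H(φ) = a` and the entries have gcd 1. -/
theorem stmt_16 (g r : ℕ) (hr : 0 < r) (hrg : r ≤ g)
    (G : Type) [AddCommGroup G] (nm : G → ℝ)
    (hnm0 : nm 0 = 0)
    (hnm_nonneg : ∀ x : G, 0 ≤ nm x)
    (hnm_add : ∀ x y : G, nm (x + y) ≤ nm x + nm y)
    (hnm_smul : ∀ (n : ℤ) (x : G), nm (n • x) = |(n : ℝ)| * nm x)
    (hdiv : ∀ (n : ℤ), n ≠ 0 → ∀ z : G, ∃ w : G, n • w = z)
    (C : Set (Fin g → G))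
    (Γ₀ : AddSubgroup G)
    (hsat : ∀ (n : ℤ), n ≠ 0 → ∀ z : G, n • z ∈ Γ₀ → z ∈ Γ₀)
    (ε : ℝ) (hε : 0 ≤ ε) :
    {x | x ∈ C ∧ ∃ A : Matrix (Fin r) (Fin g) ℤ,
        (A.map (Int.cast : ℤ → ℚ)).rank = r ∧
        ∃ b y ξ : Fin g → G, (∀ i, ∑ j, A i j • b j = 0) ∧ (∀ j, y j ∈ Γ₀) ∧
          (∀ j, nm (ξ j) ≤ ε) ∧ x = b + y + ξ}
    =
    {x | x ∈ C ∧ ∃ (A : Matrix (Fin r) (Fin g) ℤ) (a : ℤ) (σ : Fin r → Fin g),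
        0 < a ∧ Function.Injective σ ∧
        (∀ i j : Fin r, A i (σ j) = if i = j then a else 0) ∧
        (∀ i j, |A i j| ≤ a) ∧
        (∀ d : ℤ, (∀ i j, d ∣ A i j) → IsUnit d) ∧
        ∃ b y ξ : Fin g → G, (∀ i, ∑ j, A i j • b j = 0) ∧ (∀ j, y j ∈ Γ₀) ∧
          (∀ j, nm (ξ j) ≤ ε) ∧ x = b + y + ξ} := by
  ext x
  simp only [Set.mem_setOf_eq]
  constructor
  · rintro ⟨hxC, A, hrank, b, y, ξ, hb, hy, hξ, hxeq⟩
    obtain ⟨σ0, h0⟩ := aux_exists_minor _ hrank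
    have h0' : (A.submatrix id σ0).det ≠ 0 := by
      intro h
      apply h0
      have heq : (A.map (Int.cast : ℤ → ℚ)).submatrix id σ0
          = (A.submatrix id σ0).map (Int.cast : ℤ → ℚ) := rfl
      have hdet : ((A.submatrix id σ0).map (Int.cast : ℤ → ℚ)).det
          = (((A.submatrix id σ0).det : ℤ) : ℚ) := by
        exact ((Int.castRingHom ℚ).map_det (A.submatrix id σ0)).symm
      rw [heq, hdet, h]
      simp
    obtain ⟨A', a, σ, d, S, hapos, hσinj, hσA, hbound, hgcd, hdpos, hfac⟩ :=
      aux_gauss hr A ⟨σ0, h0'⟩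
    set t : Fin r → G := fun i => ∑ j, A' i j • b j with htdef
    have ht0 : ∀ i, d • t i = 0 := by
      intro i
      rw [htdef]
      calc d • ∑ j, A' i j • b j = ∑ j, (d * A' i j) • b j := by
            rw [Finset.smul_sum]
            exact Finset.sum_congr rfl fun j _ => (mul_smul _ _ _).symm
        _ = ∑ j, (∑ k, S i k * A k j) • b j :=
            Finset.sum_congr rfl fun j _ => by rw [hfac]
        _ = ∑ j, ∑ k, S i k • (A k j • b j) := by
            refine Finset.sum_congr rfl fun j _ => ?_
            rw [Finset.sum_smul]
            exact Finset.sum_congr rfl fun k _ => mul_smul _ _ _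
        _ = ∑ k, S i k • (∑ j, A k j • b j) := by
            rw [Finset.sum_comm]
            exact Finset.sum_congr rfl fun k _ => (Finset.smul_sum).symm
        _ = 0 := by
            refine Finset.sum_eq_zero fun k _ => ?_
            rw [hb k, smul_zero]
    choose w hw using fun i => hdiv a hapos.ne' (t i)
    have hwnm : ∀ i, nm (w i) = 0 := by
      intro i
      have h1 : (d * a) • w i = 0 := by
        rw [mul_smul, hw i, ht0 i]
      have h2 := hnm_smul (d * a) (w i)
      rw [h1, hnm0] at h2
      have h3 : |((d * a : ℤ) : ℝ)| ≠ 0 := by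
        simp only [ne_eq, abs_eq_zero, Int.cast_eq_zero]
        exact (mul_pos hdpos hapos).ne'
      exact ((mul_eq_zero.mp h2.symm).resolve_left h3)
    set c : Fin g → G := fun j => ∑ i, if σ i = j then w i else 0 with hcdef
    have hc_eq : ∀ i : Fin r, c (σ i) = w i := by
      intro i
      show (∑ k : Fin r, if σ k = σ i then w k else 0) = w i
      have : ∀ k : Fin r, (if σ k = σ i then w k else 0) = (if k = i then w k else 0) := by
        intro k
        simp only [hσinj.eq_iff]
      rw [show (∑ k, if σ k = σ i then w k else 0) = ∑ k, if k = i then w k else 0 from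
        Finset.sum_congr rfl fun k _ => this k]
      simp
    have hc_nm : ∀ j, nm (c j) = 0 := by
      intro j
      by_cases hj : ∃ i, σ i = j
      · obtain ⟨i, rfl⟩ := hj
        rw [hc_eq i]
        exact hwnm i
      · have hz : c j = 0 := Finset.sum_eq_zero fun i _ => if_neg (fun h => hj ⟨i, h⟩)
        rw [hz, hnm0]
    have hAc : ∀ i, ∑ j, A' i j • c j = a • w i := by
      intro i
      calc ∑ j, A' i j • c j = ∑ j, ∑ k, (if σ k = j then A' i j • w k else 0) := by
            refine Finset.sum_congr rfl fun j _ => ?_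
            show A' i j • (∑ k : Fin r, if σ k = j then w k else 0)
                = ∑ k : Fin r, if σ k = j then A' i j • w k else 0
            rw [Finset.smul_sum]
            exact Finset.sum_congr rfl fun k _ => by rw [smul_ite, smul_zero]
        _ = ∑ k, ∑ j, (if σ k = j then A' i j • w k else 0) := Finset.sum_comm
        _ = ∑ k, A' i (σ k) • w k := by
            refine Finset.sum_congr rfl fun k _ => ?_
            rw [Finset.sum_ite_eq]
            simp
        _ = ∑ k, (if i = k then a else 0) • w k := by
            refine Finset.sum_congr rfl fun k _ => ?_
            rw [hσA i k]
        _ = a • w i := by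
            rw [show (∑ k, (if i = k then a else 0) • w k)
                = ∑ k, (if i = k then a • w k else 0) from
              Finset.sum_congr rfl fun k _ => by rw [ite_smul, zero_smul]]
            rw [Finset.sum_ite_eq]
            simp
    refine ⟨hxC, A', a, σ, hapos, hσinj, hσA, hbound, hgcd,
      (fun j => b j - c j), y, (fun j => ξ j + c j), ?_, hy, ?_, ?_⟩
    · intro i
      calc ∑ j, A' i j • (b j - c j) = (∑ j, A' i j • b j) - ∑ j, A' i j • c j := by
            rw [← Finset.sum_sub_distrib]
            exact Finset.sum_congr rfl fun j _ => smul_sub _ _ _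
        _ = t i - a • w i := by rw [htdef, hAc]
        _ = 0 := by rw [hw i, sub_self]
    · intro j
      calc nm (ξ j + c j) ≤ nm (ξ j) + nm (c j) := hnm_add _ _
        _ = nm (ξ j) := by rw [hc_nm j, add_zero]
        _ ≤ ε := hξ j
    · rw [hxeq]
      funext j
      show b j + y j + ξ j = (b j - c j) + y j + (ξ j + c j)
      abel
  · rintro ⟨hxC, A, a, σ, hapos, hσinj, hσA, hbound, hgcd, b, y, ξ, hb, hy, hξ, hxeq⟩
    refine ⟨hxC, A, ?_, b, y, ξ, hb, hy, hξ, hxeq⟩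
    refine aux_rank_eq _ σ (a : ℚ) (Int.cast_ne_zero.mpr hapos.ne') ?_
    intro i j
    rw [Matrix.map_apply, hσA i j, apply_ite (Int.cast : ℤ → ℚ)]
    simp
end
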